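/- arXiv:2106.06466 — 6 statements merged into one kernel-verified Lean document; each statement's English description precedes it below -/
import Mathlib

section
/- If G is a graph saturated with respect to the disjoint union of paths P_{k_1} + P_{k_2} + ... + P_{k_m} (each k_i ≥ 2), and x is a vertex of G with degree exactly 2 and neighborhood {u, v}, then uv is an edge of G. -/
open SimpleGraph

/-- `H` has an (injective) copy inside `G`, i.e. `G` contains `H` as a subgraph. -/
def IsSubCopy {W V : Type*} (H : SimpleGraph W) (G : SimpleGraph V) : Prop :=
  ∃ f : H →g G, Function.Injective f

/-- `G` is `H`-saturated: it contains no copy of `H`, but adding any missing edge creates one. -/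
def Saturated {V W : Type*} (G : SimpleGraph V) (H : SimpleGraph W) : Prop :=
  ¬ IsSubCopy H G ∧ ∀ v w : V, v ≠ w → ¬ G.Adj v w →
    IsSubCopy H (G ⊔ fromEdgeSet {s(v, w)})

/-- The linear forest `P_k + t·P_2`. -/
def pathMatch (k t : ℕ) : SimpleGraph (Fin k ⊕ Fin t × Fin 2) :=
  fromRel (fun x y =>
    (∃ a b : Fin k, (pathGraph k).Adj a b ∧ x = Sum.inl a ∧ y = Sum.inl b) ∨
    (∃ i : Fin t, x = Sum.inr (i, 0) ∧ y = Sum.inr (i, 1)))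

/-- The book `B_k`: `k` triangles sharing a common edge (vertices `0` and `1`). -/
def bookGraph (k : ℕ) : SimpleGraph (Fin (k + 2)) :=
  fromRel (fun x _ => x = 0 ∨ x = 1)

/-- The fan `F_k`: `k` triangles sharing the common vertex `0`. -/
def fanGraph (k : ℕ) : SimpleGraph (Fin (2 * k + 1)) :=
  fromRel (fun x y => x = 0 ∨ ∃ i < k, (x : ℕ) = 2 * i + 1 ∧ (y : ℕ) = 2 * i + 2)

/-- `K_7 + (t-1)K_3 + m·K_1`. -/
def extremalGraph (t m : ℕ) : SimpleGraph (Fin 7 ⊕ (Fin (t - 1) × Fin 3) ⊕ Fin m) :=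
  fromRel (fun x y =>
    (∃ a b : Fin 7, x = Sum.inl a ∧ y = Sum.inl b) ∨
    (∃ (i : Fin (t - 1)) (a b : Fin 3),
      x = Sum.inr (Sum.inl (i, a)) ∧ y = Sum.inr (Sum.inl (i, b))))

/-- The spider tree `T` on 10 vertices: a center `0` joined to `1,2,3`, each of which
gets two further leaves. -/
def spiderT : SimpleGraph (Fin 10) :=
  fromRel (fun x y => ((x : ℕ), (y : ℕ)) ∈
    [(0,1),(0,2),(0,3),(1,4),(1,5),(2,6),(2,7),(3,8),(3,9)])

/-- A connected component is nontrivial if it contains a non-isolated vertex (i.e. an edge). -/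
def NontrivialComp {V : Type*} (G : SimpleGraph V) (C : G.ConnectedComponent) : Prop :=
  ∃ v ∈ C.supp, v ∈ G.support

/-- The linear forest `P_{k 0} + ⋯ + P_{k (m-1)}`. -/
def linearForest (m : ℕ) (k : Fin m → ℕ) : SimpleGraph (Σ i, Fin (k i)) :=
  fromRel (fun x y => ∃ (i : Fin m) (a b : Fin (k i)),
    (pathGraph (k i)).Adj a b ∧ x = ⟨i, a⟩ ∧ y = ⟨i, b⟩)

lemma lf_adj {m : ℕ} {k : Fin m → ℕ} {i j : Fin m} {a : Fin (k i)} {b : Fin (k j)} :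
    (linearForest m k).Adj ⟨i, a⟩ ⟨j, b⟩ ↔ i = j ∧ ((a : ℕ) + 1 = b ∨ (b : ℕ) + 1 = a) := by
  simp only [linearForest, fromRel_adj, pathGraph_adj]
  constructor
  · rintro ⟨hne, ⟨i', a', b', hab, h1, h2⟩ | ⟨i', a', b', hab, h1, h2⟩⟩ <;>
    · obtain ⟨rfl, h1⟩ := Sigma.mk.inj_iff.mp h1
      obtain ⟨rfl, h2⟩ := Sigma.mk.inj_iff.mp h2
      cases h1; cases h2
      exact ⟨rfl, by omega⟩
  · rintro ⟨rfl, h⟩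
    refine ⟨?_, Or.inl ⟨i, a, b, h, rfl, rfl⟩⟩
    intro he
    obtain ⟨-, h2⟩ := Sigma.mk.inj_iff.mp he
    cases h2; omega

lemma sig_eq {m : ℕ} {k : Fin m → ℕ} {i : Fin m} {s t : Fin (k i)} (h : (s : ℕ) = t) :
    (⟨i, s⟩ : Σ j, Fin (k j)) = ⟨i, t⟩ := congrArg _ (Fin.ext h)

lemma sig_val {m : ℕ} {k : Fin m → ℕ} {i : Fin m} {s t : Fin (k i)}
    (h : (⟨i, s⟩ : Σ j, Fin (k j)) = ⟨i, t⟩) : (s : ℕ) = t := by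
  obtain ⟨-, h⟩ := Sigma.mk.inj_iff.mp h; cases h; rfl

lemma sig_ne {m : ℕ} {k : Fin m → ℕ} {i : Fin m} {s t : Fin (k i)} (h : (s : ℕ) ≠ t) :
    (⟨i, s⟩ : Σ j, Fin (k j)) ≠ ⟨i, t⟩ := fun he => h (sig_val he)

lemma key {V : Type*} (G : SimpleGraph V) (m : ℕ) (k : Fin m → ℕ) (hk : ∀ i, 2 ≤ k i)
    (x u v : V) (hxu : G.Adj x u) (hxv : G.Adj x v)
    (hn : ∀ w, G.Adj x w → w = u ∨ w = v)
    (f : (Σ j, Fin (k j)) → V) (finj : Function.Injective f)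
    (hGf : ∀ c d, (linearForest m k).Adj c d →
      G.Adj (f c) (f d) ∨ (f c = u ∧ f d = v) ∨ (f c = v ∧ f d = u))
    (i : Fin m) (p q : Fin (k i)) (hpq : (p : ℕ) + 1 = (q : ℕ))
    (hfp : f ⟨i, p⟩ = u) (hfq : f ⟨i, q⟩ = v) :
    IsSubCopy (linearForest m k) G := by
  have hxu' : x ≠ u := hxu.ne
  have hxv' : x ≠ v := hxv.ne
  have hG : ∀ c d : (Σ j, Fin (k j)), (linearForest m k).Adj c d →
      (c ≠ ⟨i, p⟩ ∨ d ≠ ⟨i, q⟩) → (c ≠ ⟨i, q⟩ ∨ d ≠ ⟨i, p⟩) → G.Adj (f c) (f d) := by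
    intro c d hcd h1 h2
    rcases hGf c d hcd with h | ⟨hc, hd⟩ | ⟨hc, hd⟩
    · exact h
    · rcases h1 with h1 | h1
      · exact absurd (finj (hc.trans hfp.symm)) h1
      · exact absurd (finj (hd.trans hfq.symm)) h1
    · rcases h2 with h2 | h2
      · exact absurd (finj (hc.trans hfq.symm)) h2
      · exact absurd (finj (hd.trans hfp.symm)) h2
  by_cases hx : ∃ c, f c = x
  · obtain ⟨⟨i', r⟩, hc⟩ := hx
    -- all neighbors of c map into {u, v}, hence are ⟨i,p⟩ or ⟨i,q⟩
    have hnc : ∀ d, (linearForest m k).Adj ⟨i', r⟩ d →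
        d = (⟨i, p⟩ : Σ j, Fin (k j)) ∨ d = ⟨i, q⟩ := by
      intro d hd
      have hGd : G.Adj x (f d) := by
        rcases hGf _ _ hd with h | ⟨h1, -⟩ | ⟨h1, -⟩
        · rwa [hc] at h
        · exact absurd (hc ▸ h1) hxu'
        · exact absurd (hc ▸ h1) hxv'
      rcases hn _ hGd with h | h
      · exact Or.inl (finj (h.trans hfp.symm))
      · exact Or.inr (finj (h.trans hfq.symm))
    have hcp : (⟨i', r⟩ : Σ j, Fin (k j)) ≠ ⟨i, p⟩ := fun h => hxu' (by rw [← hc, h, hfp])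
    have hcq : (⟨i', r⟩ : Σ j, Fin (k j)) ≠ ⟨i, q⟩ := fun h => hxv' (by rw [← hc, h, hfq])
    -- c has a neighbor
    have hex : ∃ d, (linearForest m k).Adj ⟨i', r⟩ d := by
      by_cases h : (r : ℕ) + 1 < k i'
      · exact ⟨⟨i', ⟨(r : ℕ) + 1, h⟩⟩, lf_adj.mpr ⟨rfl, Or.inl rfl⟩⟩
      · have h2 := hk i'
        have h3 := r.isLt
        exact ⟨⟨i', ⟨(r : ℕ) - 1, by omega⟩⟩, lf_adj.mpr ⟨rfl, Or.inr (by simp; omega)⟩⟩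
    obtain ⟨d, hd⟩ := hex
    rcases hnc d hd with rfl | rfl
    · -- c is adjacent to ⟨i',p⟩
      obtain ⟨rfl, hr⟩ := lf_adj.mp hd
      have hr' : (r : ℕ) + 1 = (p : ℕ) := by
        rcases hr with h | h
        · exact h
        · exact absurd (sig_eq (by omega)) hcq
      have nbrA : ∀ e, (linearForest m k).Adj ⟨i', p⟩ e →
          e = (⟨i', q⟩ : Σ j, Fin (k j)) ∨ e = ⟨i', r⟩ := by
        rintro ⟨j, t⟩ he
        obtain ⟨rfl, ht⟩ := lf_adj.mp he
        rcases ht with h | h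
        · exact Or.inl (sig_eq (by omega))
        · exact Or.inr (sig_eq (by omega))
      have nbrC : ∀ e, (linearForest m k).Adj ⟨i', r⟩ e → e = (⟨i', p⟩ : Σ j, Fin (k j)) := by
        intro e he
        rcases hnc e he with rfl | rfl
        · rfl
        · obtain ⟨-, ht⟩ := lf_adj.mp he
          omega
      refine ⟨⟨fun z => f (Equiv.swap (⟨i', p⟩ : Σ j, Fin (k j)) ⟨i', r⟩ z), ?_⟩,
        finj.comp (Equiv.swap _ _).injective⟩
      intro d e hde
      rcases eq_or_ne d ⟨i', p⟩ with rfl | hdA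
      · rw [Equiv.swap_apply_left]
        rcases nbrA e hde with rfl | rfl
        · rw [Equiv.swap_apply_of_ne_of_ne (sig_ne (by omega)) (sig_ne (by omega)), hc, hfq]
          exact hxv
        · rw [Equiv.swap_apply_right, hc, hfp]
          exact hxu
      · rcases eq_or_ne e ⟨i', p⟩ with rfl | heA
        · rw [Equiv.swap_apply_left]
          rcases nbrA d hde.symm with rfl | rfl
          · rw [Equiv.swap_apply_of_ne_of_ne (sig_ne (by omega)) (sig_ne (by omega)), hc, hfq]
            exact hxv.symm
          · rw [Equiv.swap_apply_right, hc, hfp]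
            exact hxu.symm
        · rcases eq_or_ne d ⟨i', r⟩ with rfl | hdC
          · exact absurd (nbrC e hde) heA
          · rcases eq_or_ne e ⟨i', r⟩ with rfl | heC
            · exact absurd (nbrC d hde.symm) hdA
            · rw [Equiv.swap_apply_of_ne_of_ne hdA hdC, Equiv.swap_apply_of_ne_of_ne heA heC]
              exact hG d e hde (Or.inl hdA) (Or.inr heA)
    · -- c is adjacent to ⟨i',q⟩
      obtain ⟨rfl, hr⟩ := lf_adj.mp hd
      have hr' : (q : ℕ) + 1 = (r : ℕ) := by
        rcases hr with h | h
        · exact absurd (sig_eq (by omega)) hcp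
        · exact h
      have nbrB : ∀ e, (linearForest m k).Adj ⟨i', q⟩ e →
          e = (⟨i', p⟩ : Σ j, Fin (k j)) ∨ e = ⟨i', r⟩ := by
        rintro ⟨j, t⟩ he
        obtain ⟨rfl, ht⟩ := lf_adj.mp he
        rcases ht with h | h
        · exact Or.inr (sig_eq (by omega))
        · exact Or.inl (sig_eq (by omega))
      have nbrC : ∀ e, (linearForest m k).Adj ⟨i', r⟩ e → e = (⟨i', q⟩ : Σ j, Fin (k j)) := by
        intro e he
        rcases hnc e he with rfl | rfl
        · obtain ⟨-, ht⟩ := lf_adj.mp he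
          omega
        · rfl
      refine ⟨⟨fun z => f (Equiv.swap (⟨i', q⟩ : Σ j, Fin (k j)) ⟨i', r⟩ z), ?_⟩,
        finj.comp (Equiv.swap _ _).injective⟩
      intro d e hde
      rcases eq_or_ne d ⟨i', q⟩ with rfl | hdB
      · rw [Equiv.swap_apply_left]
        rcases nbrB e hde with rfl | rfl
        · rw [Equiv.swap_apply_of_ne_of_ne (sig_ne (by omega)) (sig_ne (by omega)), hc, hfp]
          exact hxu
        · rw [Equiv.swap_apply_right, hc, hfq]
          exact hxv
      · rcases eq_or_ne e ⟨i', q⟩ with rfl | heB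
        · rw [Equiv.swap_apply_left]
          rcases nbrB d hde.symm with rfl | rfl
          · rw [Equiv.swap_apply_of_ne_of_ne (sig_ne (by omega)) (sig_ne (by omega)), hc, hfp]
            exact hxu.symm
          · rw [Equiv.swap_apply_right, hc, hfq]
            exact hxv.symm
        · rcases eq_or_ne d ⟨i', r⟩ with rfl | hdC
          · exact absurd (nbrC e hde) heB
          · rcases eq_or_ne e ⟨i', r⟩ with rfl | heC
            · exact absurd (nbrC d hde.symm) hdB
            · rw [Equiv.swap_apply_of_ne_of_ne hdB hdC, Equiv.swap_apply_of_ne_of_ne heB heC]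
              exact hG d e hde (Or.inr heB) (Or.inl hdB)
  · -- x is not in the range of f: shift path i past p and insert x
    push_neg at hx
    have hq2 := q.isLt
    let F : (Σ j, Fin (k j)) → V := fun z =>
      if hj : z.1 = i then
        if (z.2 : ℕ) ≤ (p : ℕ) then f ⟨i, ⟨(z.2 : ℕ), by rw [← hj]; exact z.2.isLt⟩⟩
        else if (z.2 : ℕ) = (p : ℕ) + 1 then x
        else f ⟨i, ⟨(z.2 : ℕ) - 1,
          Nat.lt_of_le_of_lt (Nat.sub_le _ 1) (by rw [← hj]; exact z.2.isLt)⟩⟩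
      else f z
    have hFout : ∀ (j : Fin m) (t : Fin (k j)) (h : j ≠ i), F ⟨j, t⟩ = f ⟨j, t⟩ := by
      intro j t h
      simp only [F]
      rw [dif_neg h]
    have hFlo : ∀ (t : Fin (k i)) (h : (t : ℕ) ≤ (p : ℕ)), F ⟨i, t⟩ = f ⟨i, t⟩ := by
      intro t h
      simp only [F]
      rw [dif_pos trivial, if_pos h]
    have hFmid : ∀ (t : Fin (k i)) (h : (t : ℕ) = (p : ℕ) + 1), F ⟨i, t⟩ = x := by
      intro t h
      simp only [F]
      rw [dif_pos trivial, if_neg (by omega), if_pos h]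
    have hFhi : ∀ (t : Fin (k i)) (h : (p : ℕ) + 1 < (t : ℕ)),
        F ⟨i, t⟩ = f ⟨i, ⟨(t : ℕ) - 1, Nat.lt_of_le_of_lt (Nat.sub_le _ 1) t.isLt⟩⟩ := by
      intro t h
      simp only [F]
      rw [dif_pos trivial, if_neg (by omega), if_neg (by omega)]
    have main : ∀ (s t : Fin (k i)), (s : ℕ) + 1 = (t : ℕ) → G.Adj (F ⟨i, s⟩) (F ⟨i, t⟩) := by
      intro s t hst
      rcases Nat.lt_or_ge (s : ℕ) (p : ℕ) with h | h
      · rw [hFlo s (by omega), hFlo t (by omega)]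
        exact hG _ _ (lf_adj.mpr ⟨rfl, Or.inl hst⟩) (Or.inl (sig_ne (by omega)))
          (Or.inl (sig_ne (by omega)))
      · rcases Nat.eq_or_lt_of_le h with h2 | h2
        · have he : (⟨i, s⟩ : Σ j, Fin (k j)) = ⟨i, p⟩ := sig_eq (by omega)
          rw [hFlo s (by omega), hFmid t (by omega), he, hfp]
          exact hxu.symm
        · rcases Nat.eq_or_lt_of_le h2 with h3 | h3
          · have he : (⟨i, ⟨(t : ℕ) - 1, Nat.lt_of_le_of_lt (Nat.sub_le _ 1) t.isLt⟩⟩ :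
                Σ j, Fin (k j)) = ⟨i, q⟩ := sig_eq (show (t : ℕ) - 1 = (q : ℕ) by omega)
            rw [hFmid s (by omega), hFhi t (by omega), he, hfq]
            exact hxv
          · rw [hFhi s (by omega), hFhi t (by omega)]
            exact hG _ _
              (lf_adj.mpr ⟨rfl, Or.inl (show (s : ℕ) - 1 + 1 = (t : ℕ) - 1 by omega)⟩)
              (Or.inl (sig_ne (show (s : ℕ) - 1 ≠ (p : ℕ) by omega)))
              (Or.inr (sig_ne (show (t : ℕ) - 1 ≠ (p : ℕ) by omega)))
    have Fadj : ∀ d e, (linearForest m k).Adj d e → G.Adj (F d) (F e) := by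
      rintro ⟨j, s⟩ ⟨j', t⟩ hde
      obtain ⟨rfl, hst⟩ := lf_adj.mp hde
      by_cases hj : j = i
      · subst hj
        rcases hst with h | h
        · exact main s t h
        · exact (main t s h).symm
      · rw [hFout j s hj, hFout j t hj]
        exact hG _ _ hde (Or.inl fun h => hj (congrArg Sigma.fst h)) (Or.inl fun h => hj (congrArg Sigma.fst h))
    have Finj : Function.Injective F := by
      rintro ⟨j, s⟩ ⟨j', t⟩ h
      by_cases hj : j = i <;> by_cases hj' : j' = i
      · subst hj; subst hj'
        rcases Nat.lt_trichotomy (s : ℕ) ((p : ℕ) + 1) with h1 | h1 | h1 <;>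
          rcases Nat.lt_trichotomy (t : ℕ) ((p : ℕ) + 1) with h2 | h2 | h2
        · rw [hFlo s (by omega), hFlo t (by omega)] at h
          exact finj h
        · rw [hFlo s (by omega), hFmid t (by omega)] at h
          exact absurd h (hx _)
        · rw [hFlo s (by omega), hFhi t (by omega)] at h
          have h5 : (s : ℕ) = (t : ℕ) - 1 := sig_val (finj h)
          omega
        · rw [hFmid s (by omega), hFlo t (by omega)] at h
          exact absurd h.symm (hx _)
        · exact sig_eq (by omega)
        · rw [hFmid s (by omega), hFhi t (by omega)] at h
          exact absurd h.symm (hx _)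
        · rw [hFhi s (by omega), hFlo t (by omega)] at h
          have h5 : (s : ℕ) - 1 = (t : ℕ) := sig_val (finj h)
          omega
        · rw [hFhi s (by omega), hFmid t (by omega)] at h
          exact absurd h (hx _)
        · rw [hFhi s (by omega), hFhi t (by omega)] at h
          have h5 : (s : ℕ) - 1 = (t : ℕ) - 1 := sig_val (finj h)
          exact sig_eq (by omega)
      · subst hj
        rw [hFout j' t hj'] at h
        rcases Nat.lt_or_ge (p : ℕ) (s : ℕ) with h1 | h1
        · rcases Nat.eq_or_lt_of_le h1 with h3 | h3
          · rw [hFmid s (by omega)] at h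
            exact absurd h.symm (hx _)
          · rw [hFhi s (by omega)] at h
            exact absurd (congrArg Sigma.fst (finj h)).symm hj'
        · rw [hFlo s (by omega)] at h
          exact absurd (congrArg Sigma.fst (finj h)).symm hj'
      · subst hj'
        rw [hFout j s hj] at h
        rcases Nat.lt_or_ge (p : ℕ) (t : ℕ) with h1 | h1
        · rcases Nat.eq_or_lt_of_le h1 with h3 | h3
          · rw [hFmid t (by omega)] at h
            exact absurd h (hx _)
          · rw [hFhi t (by omega)] at h
            exact absurd (congrArg Sigma.fst (finj h)) hj
        · rw [hFlo t (by omega)] at h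
          exact absurd (congrArg Sigma.fst (finj h)) hj
      · rw [hFout j s hj, hFout j' t hj'] at h
        exact finj h
    exact ⟨⟨F, fun {d e} h => Fadj d e h⟩, Finj⟩

/-- If `G` is saturated with respect to a linear forest (all paths of order at least 2)
and `x` has degree exactly `2` with neighborhood `{u, v}`, then `uv ∈ E(G)`. -/
theorem statement0 {V : Type*} (G : SimpleGraph V) (m : ℕ) (k : Fin m → ℕ)
    (hk : ∀ i, 2 ≤ k i) (hsat : Saturated G (linearForest m k))
    (x u v : V) (huv : u ≠ v) (hnbr : G.neighborSet x = {u, v}) :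
    G.Adj u v := by
  by_contra hadj
  obtain ⟨hno, hsat2⟩ := hsat
  obtain ⟨f, finj⟩ := hsat2 u v huv hadj
  have hxu : G.Adj x u := by
    have : u ∈ G.neighborSet x := by rw [hnbr]; exact Set.mem_insert _ _
    exact this
  have hxv : G.Adj x v := by
    have : v ∈ G.neighborSet x := by rw [hnbr]; exact Set.mem_insert_of_mem _ rfl
    exact this
  have hn : ∀ w, G.Adj x w → w = u ∨ w = v := by
    intro w hw
    have : w ∈ G.neighborSet x := hw
    rw [hnbr] at this
    exact this
  have hGf : ∀ c d, (linearForest m k).Adj c d →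
      G.Adj (f c) (f d) ∨ (f c = u ∧ f d = v) ∨ (f c = v ∧ f d = u) := by
    intro c d hcd
    have := f.map_adj hcd
    rw [sup_adj, fromEdgeSet_adj] at this
    rcases this with h | ⟨hs, -⟩
    · exact Or.inl h
    · rcases Sym2.eq_iff.mp (by simpa using hs) with ⟨h1, h2⟩ | ⟨h1, h2⟩
      · exact Or.inr (Or.inl ⟨h1, h2⟩)
      · exact Or.inr (Or.inr ⟨h1, h2⟩)
  have hedge : ∃ (i : Fin m) (p q : Fin (k i)), (linearForest m k).Adj ⟨i, p⟩ ⟨i, q⟩ ∧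
      f ⟨i, p⟩ = u ∧ f ⟨i, q⟩ = v := by
    by_contra hne
    push_neg at hne
    apply hno
    refine ⟨⟨f, fun {c d} h => ?_⟩, finj⟩
    rcases hGf c d h with h' | ⟨h1, h2⟩ | ⟨h1, h2⟩
    · exact h'
    · obtain ⟨i, s⟩ := c
      obtain ⟨j, t⟩ := d
      obtain ⟨rfl, -⟩ := lf_adj.mp h
      exact absurd h2 (hne i s t h h1)
    · obtain ⟨i, s⟩ := c
      obtain ⟨j, t⟩ := d
      obtain ⟨rfl, -⟩ := lf_adj.mp h
      exact absurd h1 (hne i t s h.symm h2)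
  obtain ⟨i, p, q, hab, hfp, hfq⟩ := hedge
  obtain ⟨-, hpq⟩ := lf_adj.mp hab
  rcases hpq with h | h
  · exact hno (key G m k hk x u v hxu hxv hn f finj hGf i p q h hfp hfq)
  · have hn' : ∀ w, G.Adj x w → w = v ∨ w = u := fun w hw => (hn w hw).symm
    have hGf' : ∀ c d, (linearForest m k).Adj c d →
        G.Adj (f c) (f d) ∨ (f c = v ∧ f d = u) ∨ (f c = u ∧ f d = v) := by
      intro c d hcd
      rcases hGf c d hcd with h' | h' | h'
      · exact Or.inl h'
      · exact Or.inr (Or.inr h')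
      · exact Or.inr (Or.inl h')
    exact hno (key G m k hk x v u hxv hxu hn' f finj hGf' i q p h hfq hfp)
end

section
/- Let G be a (P_k + tP_2)-saturated graph with k ≥ 2 and t ≥ 1 having an isolated vertex w. Then for any non-isolated vertex x of G and any subgraph H of G + xw isomorphic to P_k + tP_2, the closed neighborhood of x in G together with w is contained in the vertex set of H. -/
open SimpleGraph

/-- If a copy of `H` in `G + e` misses an endpoint of `e`, it is a copy in `G`. -/
lemma copy_in_G {V W : Type*} (G : SimpleGraph V) (H : SimpleGraph W) (x w z : V)
    (f : H →g (G ⊔ fromEdgeSet {s(x, w)})) (hf : Function.Injective f)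
    (hz : z = x ∨ z = w) (hzr : z ∉ Set.range f) : IsSubCopy H G := by
  refine ⟨⟨f, ?_⟩, hf⟩
  intro a b hab
  rcases (sup_adj _ _ _ _).mp (f.map_adj hab) with h | h
  · exact h
  · exfalso
    obtain ⟨he, -⟩ := (fromEdgeSet_adj _).mp h
    rw [Set.mem_singleton_iff, Sym2.eq_iff] at he
    rcases he with ⟨h1, h2⟩ | ⟨h1, h2⟩ <;> rcases hz with rfl | rfl
    · exact hzr ⟨a, h1⟩
    · exact hzr ⟨b, h2⟩
    · exact hzr ⟨b, h2⟩
    · exact hzr ⟨a, h1⟩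

/-- Let `G` be `(P_k + tP_2)`-saturated with an isolated vertex `w`. For every
non-isolated vertex `x` and every copy `f` of `P_k + tP_2` in `G + xw`, the closed
neighborhood of `x` together with `w` lies in the vertex set of the copy. -/
theorem statement2 {V : Type*} (G : SimpleGraph V) (k t : ℕ) (hk : 2 ≤ k) (ht : 1 ≤ t)
    (hsat : Saturated G (pathMatch k t)) (w : V) (hw : w ∉ G.support)
    (x : V) (hx : x ∈ G.support)
    (f : pathMatch k t →g (G ⊔ fromEdgeSet {s(x, w)})) (hf : Function.Injective f) :
    insert w (insert x (G.neighborSet x)) ⊆ Set.range f := by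
  obtain ⟨hnc, -⟩ := hsat
  have hwadj : ∀ z, ¬ G.Adj w z := fun z h => hw ⟨z, h⟩
  intro y hy
  by_contra hyf
  rcases hy with rfl | rfl | hy
  · exact hnc (copy_in_G G _ x y y f hf (Or.inr rfl) hyf)
  · exact hnc (copy_in_G G _ y w y f hf (Or.inl rfl) hyf)
  · -- y is a neighbor of x in G
    have hyx : G.Adj y x := (G.mem_neighborSet x y).mp hy |>.symm
    -- w must be in the range of f
    by_cases hwr : w ∈ Set.range f
    · obtain ⟨a, ha⟩ := hwr
      -- swap w for y
      set g : Fin k ⊕ Fin t × Fin 2 → V := fun v => if v = a then y else f v with hg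
      have hginj : Function.Injective g := by
        intro u v huv
        simp only [hg] at huv
        split_ifs at huv with h1 h2 h2
        · exact h1.trans h2.symm
        · exact absurd ⟨v, huv.symm⟩ hyf
        · exact absurd ⟨u, huv⟩ hyf
        · exact hf huv
      have hghom : ∀ {u v}, (pathMatch k t).Adj u v → G.Adj (g u) (g v) := by
        intro u v huv
        have hKK := f.map_adj huv
        have keyadj : ∀ b : Fin k ⊕ Fin t × Fin 2, b ≠ a →
            (G ⊔ fromEdgeSet {s(x, w)}).Adj w (f b) → f b = x := by
          intro b hb hadj
          rcases (sup_adj _ _ _ _).mp hadj with h | h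
          · exact absurd h (hwadj _)
          · obtain ⟨he, hne⟩ := (fromEdgeSet_adj _).mp h
            rw [Set.mem_singleton_iff, Sym2.eq_iff] at he
            rcases he with ⟨h1, h2⟩ | ⟨h1, h2⟩
            · exact absurd (hf (h2.trans ha.symm)) hb
            · exact h2
        by_cases hu : u = a <;> by_cases hv : v = a
        · exfalso; rw [hu, hv] at huv; exact (pathMatch k t).irrefl huv
        · have hvx : f v = x := keyadj v hv (by rw [hu, ha] at hKK; exact hKK)
          simp only [hg, if_pos hu, if_neg hv, hvx]
          exact hyx
        · have hux : f u = x := keyadj u hu (by rw [hv, ha] at hKK; exact hKK.symm)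
          simp only [hg, if_neg hu, if_pos hv, hux]
          exact hyx.symm
        · simp only [hg, if_neg hu, if_neg hv]
          rcases (sup_adj _ _ _ _).mp hKK with h | h
          · exact h
          · exfalso
            obtain ⟨he, -⟩ := (fromEdgeSet_adj _).mp h
            rw [Set.mem_singleton_iff, Sym2.eq_iff] at he
            rcases he with ⟨h1, h2⟩ | ⟨h1, h2⟩
            · exact hv (hf (h2.trans ha.symm))
            · exact hu (hf (h1.trans ha.symm))
      exact hnc ⟨⟨g, hghom⟩, hginj⟩
    · exact hnc (copy_in_G G _ x w w f hf (Or.inr rfl) hwr)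
end

section
/- For every n ≥ 3t + 4 (t ≥ 1), the graph K_7 + (t−1)K_3 + (n − 3t − 4) isolated vertices is (P_6 + tP_2)-saturated and has exactly 3t + 18 edges. -/
open SimpleGraph

section helpers
variable {t m : ℕ}

abbrev Vg (t m : ℕ) := Fin 7 ⊕ (Fin (t - 1) × Fin 3) ⊕ Fin m
abbrev kv (a : Fin 7) : Vg t m := Sum.inl a
abbrev tv (i : Fin (t - 1)) (c : Fin 3) : Vg t m := Sum.inr (Sum.inl (i, c))
abbrev iv (j : Fin m) : Vg t m := Sum.inr (Sum.inr j)

lemma adj_kk {a b : Fin 7} (h : a ≠ b) :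
    (extremalGraph t m).Adj (kv a) (kv b) := by
  rw [extremalGraph, fromRel_adj]
  exact ⟨by simpa using h, Or.inl (Or.inl ⟨a, b, rfl, rfl⟩)⟩

lemma adj_tt (i : Fin (t - 1)) {a b : Fin 3} (h : a ≠ b) :
    (extremalGraph t m).Adj (tv i a) (tv i b) := by
  rw [extremalGraph, fromRel_adj]
  exact ⟨by simpa using h, Or.inl (Or.inr ⟨i, a, b, rfl, rfl⟩)⟩

def lab : Vg t m → Option (Fin (t - 1) ⊕ Fin m) :=
  Sum.elim (fun _ => none) (Sum.elim (fun p => some (Sum.inl p.1)) (fun j => some (Sum.inr j)))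

lemma lab_adj {x y : Vg t m} (h : (extremalGraph t m).Adj x y) : lab x = lab y := by
  rw [extremalGraph, fromRel_adj] at h
  rcases h.2 with (⟨a, b, rfl, rfl⟩ | ⟨i, a, b, rfl, rfl⟩) | (⟨a, b, rfl, rfl⟩ | ⟨i, a, b, rfl, rfl⟩) <;> rfl

lemma lab_none {x : Vg t m} (h : lab x = none) : ∃ a, x = kv a := by
  rcases x with a | ⟨i, c⟩ | j
  · exact ⟨a, rfl⟩
  · simp [lab] at h
  · simp [lab] at h

lemma lab_tri {x : Vg t m} {i : Fin (t - 1)} (h : lab x = some (Sum.inl i)) :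
    ∃ c, x = tv i c := by
  rcases x with a | ⟨i', c⟩ | j
  · simp [lab] at h
  · simp [lab] at h; exact ⟨c, by rw [h]⟩
  · simp [lab] at h

lemma lab_iso {x : Vg t m} {j : Fin m} (h : lab x = some (Sum.inr j)) : x = iv j := by
  rcases x with a | ⟨i', c⟩ | j'
  · simp [lab] at h
  · simp [lab] at h
  · simp [lab] at h; rw [h]

lemma pm_adj_path (a b : Fin 6) (h : (a : ℕ) + 1 = b) :
    (pathMatch 6 t).Adj (Sum.inl a) (Sum.inl b) := by
  rw [pathMatch, fromRel_adj]
  refine ⟨by simp [Fin.ext_iff]; omega, Or.inl (Or.inl ⟨a, b, ?_, rfl, rfl⟩)⟩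
  rw [pathGraph_adj]; omega

lemma pm_adj_match (i : Fin t) :
    (pathMatch 6 t).Adj (Sum.inr (i, 0)) (Sum.inr (i, 1)) := by
  rw [pathMatch, fromRel_adj]
  exact ⟨by simp, Or.inl (Or.inr ⟨i, rfl, rfl⟩)⟩

lemma subcopy_of {V : Type*} {G : SimpleGraph V} (P : Fin 6 → V) (M : Fin t → Fin 2 → V)
    (hP : ∀ a b : Fin 6, (a : ℕ) + 1 = b → G.Adj (P a) (P b))
    (hM : ∀ i, G.Adj (M i 0) (M i 1))
    (hPi : Function.Injective P)
    (hMi : ∀ i c i' c', M i c = M i' c' → i = i' ∧ c = c')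
    (hPM : ∀ a i c, P a ≠ M i c) :
    IsSubCopy (pathMatch 6 t) G := by
  have hmap : ∀ x y : Fin 6 ⊕ Fin t × Fin 2, (pathMatch 6 t).Adj x y →
      G.Adj (Sum.elim P (fun p => M p.1 p.2) x) (Sum.elim P (fun p => M p.1 p.2) y) := by
    intro x y hxy
    rw [pathMatch, fromRel_adj] at hxy
    obtain ⟨hne, h | h⟩ := hxy
    · rcases h with ⟨a, b, hab, rfl, rfl⟩ | ⟨i, rfl, rfl⟩
      · rcases pathGraph_adj.mp hab with h' | h'
        · exact hP a b h'
        · exact (hP b a h').symm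
      · exact hM i
    · rcases h with ⟨a, b, hab, rfl, rfl⟩ | ⟨i, rfl, rfl⟩
      · rcases pathGraph_adj.mp hab with h' | h'
        · exact (hP a b h').symm
        · exact hP b a h'
      · exact (hM i).symm
  refine ⟨⟨Sum.elim P (fun p => M p.1 p.2), fun h => hmap _ _ h⟩, ?_⟩
  rintro (a | ⟨i, c⟩) (b | ⟨i', c'⟩) h
  · rw [hPi h]
  · exact absurd h (hPM a i' c')
  · exact absurd h.symm (hPM b i c)
  · obtain ⟨h1, h2⟩ := hMi i c i' c' h
    rw [h1, h2]

lemma no_copy (ht : 1 ≤ t) : ¬ IsSubCopy (pathMatch 6 t) (extremalGraph t m) := by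
  rintro ⟨f, hf⟩
  -- labels are constant along the path
  have hpath : ∀ a : Fin 6, lab (f (Sum.inl a)) = lab (f (Sum.inl 0)) := by
    have h01 := lab_adj (f.map_adj (pm_adj_path 0 1 rfl))
    have h12 := lab_adj (f.map_adj (pm_adj_path 1 2 rfl))
    have h23 := lab_adj (f.map_adj (pm_adj_path 2 3 rfl))
    have h34 := lab_adj (f.map_adj (pm_adj_path 3 4 rfl))
    have h45 := lab_adj (f.map_adj (pm_adj_path 4 5 rfl))
    intro a
    fin_cases a
    · rfl
    · exact h01.symm
    · exact h12.symm.trans h01.symm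
    · exact h23.symm.trans (h12.symm.trans h01.symm)
    · exact h34.symm.trans (h23.symm.trans (h12.symm.trans h01.symm))
    · exact h45.symm.trans (h34.symm.trans (h23.symm.trans (h12.symm.trans h01.symm)))
  -- the path lands in K7
  have hk : ∀ a : Fin 6, ∃ p, f (Sum.inl a) = kv p := by
    cases hl : lab (f (Sum.inl 0)) with
    | none => exact fun a => lab_none ((hpath a).trans hl)
    | some s =>
      exfalso
      cases s with
      | inl i =>
        have hv : ∀ a : Fin 6, ∃ c, f (Sum.inl a) = tv i c :=
          fun a => lab_tri ((hpath a).trans hl)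
        choose c hc using hv
        have hcinj : Function.Injective c := by
          intro a b h
          have : f (Sum.inl a) = f (Sum.inl b) := by rw [hc a, hc b, h]
          simpa using hf this
        have := Fintype.card_le_of_injective c hcinj
        simp at this
      | inr j =>
        have h0 := lab_iso ((hpath 0).trans hl)
        have h1 := lab_iso ((hpath 1).trans hl)
        have := hf (h0.trans h1.symm)
        simp at this
  choose p hp using hk
  -- each matching pair lands in one triangle
  have hmlab : ∀ i : Fin t, lab (f (Sum.inr (i, 0))) = lab (f (Sum.inr (i, 1))) :=
    fun i => lab_adj (f.map_adj (pm_adj_match i))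
  have htri : ∀ i : Fin t, ∃ r : Fin (t - 1), ∃ c0 c1 : Fin 3,
      c0 ≠ c1 ∧ f (Sum.inr (i, 0)) = tv r c0 ∧ f (Sum.inr (i, 1)) = tv r c1 := by
    intro i
    cases hl : lab (f (Sum.inr (i, 0))) with
    | none =>
      exfalso
      obtain ⟨q0, hq0⟩ := lab_none hl
      obtain ⟨q1, hq1⟩ := lab_none (((hmlab i).symm).trans hl)
      set F : Fin 6 ⊕ Fin 2 → Fin 7 :=
        Sum.elim p (fun c => if c = 0 then q0 else q1) with hF
      have hFval : ∀ x : Fin 6 ⊕ Fin 2,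
          f (Sum.elim Sum.inl (fun c => Sum.inr (i, c)) x) = kv (F x) := by
        rintro (a | c)
        · exact hp a
        · fin_cases c
          · simpa [hF] using hq0
          · simpa [hF] using hq1
      have hFinj : Function.Injective F := by
        intro x y h
        have : f (Sum.elim Sum.inl (fun c => Sum.inr (i, c)) x)
            = f (Sum.elim Sum.inl (fun c => Sum.inr (i, c)) y) := by
          rw [hFval x, hFval y, h]
        have h2 := hf this
        rcases x with a | c <;> rcases y with a' | c' <;> simp_all
      have := Fintype.card_le_of_injective F hFinj
      simp at this
    | some s =>
      cases s with
      | inl r =>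
        obtain ⟨c0, h0⟩ := lab_tri hl
        obtain ⟨c1, h1⟩ := lab_tri (((hmlab i).symm).trans hl)
        refine ⟨r, c0, c1, ?_, h0, h1⟩
        intro hcc
        have : f (Sum.inr (i, 0)) = f (Sum.inr (i, 1)) := by rw [h0, h1, hcc]
        have := hf this
        simp at this
      | inr j =>
        exfalso
        have h0 := lab_iso hl
        have h1 := lab_iso (((hmlab i).symm).trans hl)
        have := hf (h0.trans h1.symm)
        simp at this
  choose r c0 c1 hne h0 h1 using htri
  have hrinj : Function.Injective r := by
    intro i i' hrr
    by_contra hii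
    -- four distinct vertices in one triangle
    have d1 : c0 i ≠ c1 i := hne i
    have d2 : c0 i' ≠ c1 i' := hne i'
    have d3 : c0 i ≠ c0 i' := by
      intro h
      have : f (Sum.inr (i, 0)) = f (Sum.inr (i', 0)) := by
        rw [h0 i, h0 i', h, hrr]
      have h' := hf this
      rw [Sum.inr.injEq, Prod.mk.injEq] at h'
      exact hii h'.1
    have d4 : c0 i ≠ c1 i' := by
      intro h
      have : f (Sum.inr (i, 0)) = f (Sum.inr (i', 1)) := by
        rw [h0 i, h1 i', h, hrr]
      have h' := hf this
      rw [Sum.inr.injEq, Prod.mk.injEq] at h'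
      exact absurd h'.2 (by decide)
    have d5 : c1 i ≠ c0 i' := by
      intro h
      have : f (Sum.inr (i, 1)) = f (Sum.inr (i', 0)) := by
        rw [h1 i, h0 i', h, hrr]
      have h' := hf this
      rw [Sum.inr.injEq, Prod.mk.injEq] at h'
      exact absurd h'.2 (by decide)
    have d6 : c1 i ≠ c1 i' := by
      intro h
      have : f (Sum.inr (i, 1)) = f (Sum.inr (i', 1)) := by
        rw [h1 i, h1 i', h, hrr]
      have h' := hf this
      rw [Sum.inr.injEq, Prod.mk.injEq] at h'
      exact hii h'.1
    have e1 : ¬ c1 i = c0 i := fun h => d1 h.symm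
    have e2 : ¬ c1 i' = c0 i' := fun h => d2 h.symm
    have e3 : ¬ c0 i' = c0 i := fun h => d3 h.symm
    have e4 : ¬ c1 i' = c0 i := fun h => d4 h.symm
    have e5 : ¬ c0 i' = c1 i := fun h => d5 h.symm
    have e6 : ¬ c1 i' = c1 i := fun h => d6 h.symm
    have hginj : Function.Injective ![c0 i, c1 i, c0 i', c1 i'] := by
      intro x y h
      fin_cases x <;> fin_cases y <;> simp_all
    have := Fintype.card_le_of_injective _ hginj
    simp at this
  have := Fintype.card_le_of_injective r hrinj
  simp only [Fintype.card_fin] at this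
  omega

lemma adj_new (v w : Vg t m) (h : v ≠ w) :
    (extremalGraph t m ⊔ fromEdgeSet {s(v, w)}).Adj v w := by
  rw [sup_adj]
  exact Or.inr ((fromEdgeSet_adj _).mpr ⟨rfl, h⟩)

lemma fin3_shift_ne (q : Fin 3) (c : Fin 2) : q + 1 + (⟨c.val, by omega⟩ : Fin 3) ≠ q := by
  intro h
  have hv := congrArg Fin.val h
  simp [Fin.val_add] at hv
  have h1 := q.isLt
  have h2 := c.isLt
  omega

lemma fin3_shift_inj (q : Fin 3) (c c' : Fin 2)
    (h : q + 1 + (⟨c.val, by omega⟩ : Fin 3) = q + 1 + (⟨c'.val, by omega⟩ : Fin 3)) : c = c' := by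
  have := add_left_cancel h
  rw [Fin.mk.injEq] at this
  exact Fin.ext this

lemma fin3_shift_ne' (q : Fin 3) (c c' : Fin 2) (h : c ≠ c') :
    q + 1 + (⟨c.val, by omega⟩ : Fin 3) ≠ q + 1 + (⟨c'.val, by omega⟩ : Fin 3) :=
  fun hh => h (fin3_shift_inj q c c' hh)

lemma T1 (a : Fin 7) (w : Vg t m) (pos : Fin (t - 1) → Fin 3)
    (hw1 : ∀ r c, w = tv r c → c = pos r)
    (hw2 : ∀ b, w ≠ kv b) :
    IsSubCopy (pathMatch 6 t) (extremalGraph t m ⊔ fromEdgeSet {s(kv a, w)}) := by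
  set s : Fin 7 ≃ Fin 7 := Equiv.swap 4 a with hs
  set P : Fin 6 → Vg t m :=
    fun k => if k.val = 5 then w else kv (s (k.castLE (by omega))) with hP
  set M : Fin t → Fin 2 → Vg t m := fun j c =>
    if h : j.val = 0 then kv (s ⟨5 + c.val, by have := c.isLt; omega⟩)
    else tv ⟨j.val - 1, by have := j.isLt; omega⟩
      (pos ⟨j.val - 1, by have := j.isLt; omega⟩ + 1 + ⟨c.val, by have := c.isLt; omega⟩) with hM
  apply subcopy_of P M
  · -- path adjacency
    intro x y hxy
    by_cases hy : y.val = 5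
    · have hx : x.val = 4 := by omega
      have hx4 : (x.castLE (by omega : 6 ≤ 7)) = (4 : Fin 7) := by
        rw [Fin.ext_iff]; simpa using hx
      have px : P x = kv a := by
        simp only [hP]
        rw [if_neg (by omega), hx4, Equiv.swap_apply_left]
      have py : P y = w := by simp only [hP]; rw [if_pos hy]
      rw [px, py]
      exact adj_new _ _ (Ne.symm (hw2 a))
    · have hx : ¬ x.val = 5 := by omega
      simp only [hP]
      rw [if_neg hx, if_neg hy, sup_adj]
      refine Or.inl (adj_kk (s.injective.ne ?_))
      simp only [ne_eq, Fin.ext_iff, Fin.coe_castLE]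
      omega
  · -- matching adjacency
    intro j
    simp only [hM]
    by_cases hj : j.val = 0
    · rw [dif_pos hj, dif_pos hj, sup_adj]
      refine Or.inl (adj_kk (s.injective.ne ?_))
      simp only [ne_eq, Fin.mk.injEq]
      decide
    · rw [dif_neg hj, dif_neg hj, sup_adj]
      exact Or.inl (adj_tt _ (fin3_shift_ne' _ 0 1 (by decide)))
  · -- P injective
    intro x y h
    simp only [hP] at h
    split_ifs at h with h1 h2 h2
    · exact Fin.ext (by omega)
    · exact absurd h (hw2 _)
    · exact absurd h.symm (hw2 _)
    · have := s.injective (Sum.inl_injective h)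
      rw [Fin.ext_iff] at this
      exact Fin.ext (by simpa using this)
  · -- M injective
    intro j c j' c' h
    simp only [hM] at h
    by_cases h1 : (j : ℕ) = 0 <;> by_cases h2 : (j' : ℕ) = 0
    · rw [dif_pos h1, dif_pos h2] at h
      have := s.injective (Sum.inl_injective h)
      rw [Fin.mk.injEq] at this
      exact ⟨Fin.ext (by omega), Fin.ext (by omega)⟩
    · rw [dif_pos h1, dif_neg h2] at h
      exact absurd h (by simp)
    · rw [dif_neg h1, dif_pos h2] at h
      exact absurd h (by simp)
    · rw [dif_neg h1, dif_neg h2] at h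
      rw [Sum.inr.injEq, Sum.inl.injEq, Prod.mk.injEq, Fin.mk.injEq] at h
      obtain ⟨hj, hc⟩ := h
      have hjj : j = j' := Fin.ext (by omega)
      subst hjj
      exact ⟨rfl, fin3_shift_inj _ _ _ hc⟩
  · -- disjointness
    intro x j c
    simp only [hP, hM]
    split_ifs with h1 h2 h2
    · exact hw2 _
    · intro h
      exact fin3_shift_ne _ c (hw1 _ _ h)
    · intro h
      have := s.injective (Sum.inl_injective h)
      rw [Fin.ext_iff] at this
      simp only [Fin.coe_castLE] at this
      have hx := x.isLt
      have hc := c.isLt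
      omega
    · simp

lemma T2 (v w : Vg t m) (hvw : v ≠ w) (pos : Fin (t - 1) → Fin 3)
    (hv1 : ∀ r c, v = tv r c → c = pos r) (hw1 : ∀ r c, w = tv r c → c = pos r)
    (hv2 : ∀ b, v ≠ kv b) (hw2 : ∀ b, w ≠ kv b) :
    IsSubCopy (pathMatch 6 t) (extremalGraph t m ⊔ fromEdgeSet {s(v, w)}) := by
  set P : Fin 6 → Vg t m := fun k => kv (k.castLE (by omega)) with hP
  set M : Fin t → Fin 2 → Vg t m := fun j c =>
    if h : j.val = 0 then (if c = 0 then v else w)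
    else tv ⟨j.val - 1, by have := j.isLt; omega⟩
      (pos ⟨j.val - 1, by have := j.isLt; omega⟩ + 1 + ⟨c.val, by have := c.isLt; omega⟩) with hM
  apply subcopy_of P M
  · intro x y hxy
    simp only [hP]
    rw [sup_adj]
    refine Or.inl (adj_kk ?_)
    simp only [ne_eq, Fin.ext_iff, Fin.coe_castLE]
    omega
  · intro j
    simp only [hM]
    by_cases hj : (j : ℕ) = 0
    · rw [dif_pos hj, dif_pos hj]
      exact adj_new _ _ hvw
    · rw [dif_neg hj, dif_neg hj, sup_adj]
      exact Or.inl (adj_tt _ (fin3_shift_ne' _ 0 1 (by decide)))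
  · intro x y h
    simp only [hP] at h
    have := Sum.inl_injective h
    rw [Fin.ext_iff] at this
    exact Fin.ext (by simpa using this)
  · intro j c j' c' h
    simp only [hM] at h
    by_cases h1 : (j : ℕ) = 0 <;> by_cases h2 : (j' : ℕ) = 0
    · rw [dif_pos h1, dif_pos h2] at h
      have hjj : j = j' := Fin.ext (by omega)
      subst hjj
      refine ⟨rfl, ?_⟩
      by_cases hc : c = 0 <;> by_cases hc' : c' = 0
      · rw [hc, hc']
      · rw [if_pos hc, if_neg hc'] at h; exact absurd h hvw
      · rw [if_neg hc, if_pos hc'] at h; exact absurd h.symm hvw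
      · omega
    · rw [dif_pos h1, dif_neg h2] at h
      by_cases hc : c = 0
      · rw [if_pos hc] at h
        exact absurd (fin3_shift_ne _ c' (hv1 _ _ h)) (by simp)
      · rw [if_neg hc] at h
        exact absurd (fin3_shift_ne _ c' (hw1 _ _ h)) (by simp)
    · rw [dif_neg h1, dif_pos h2] at h
      by_cases hc : c' = 0
      · rw [if_pos hc] at h
        exact absurd (fin3_shift_ne _ c (hv1 _ _ h.symm)) (by simp)
      · rw [if_neg hc] at h
        exact absurd (fin3_shift_ne _ c (hw1 _ _ h.symm)) (by simp)
    · rw [dif_neg h1, dif_neg h2] at h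
      rw [Sum.inr.injEq, Sum.inl.injEq, Prod.mk.injEq, Fin.mk.injEq] at h
      obtain ⟨hj, hc⟩ := h
      have hjj : j = j' := Fin.ext (by omega)
      subst hjj
      exact ⟨rfl, fin3_shift_inj _ _ _ hc⟩
  · intro x j c
    simp only [hP, hM]
    by_cases h1 : (j : ℕ) = 0
    · rw [dif_pos h1]
      by_cases hc : c = 0
      · rw [if_pos hc]; exact fun h => hv2 _ h.symm
      · rw [if_neg hc]; exact fun h => hw2 _ h.symm
    · rw [dif_neg h1]
      simp

lemma edge_count : (extremalGraph t m).edgeSet.ncard = 21 + 3 * (t - 1) := by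
  classical
  set A : Set (Sym2 (Vg t m)) :=
    Set.range (fun e : {e : Sym2 (Fin 7) // ¬ e.IsDiag} => Sym2.map kv e.val) with hA
  set B : Set (Sym2 (Vg t m)) :=
    Set.range (fun p : Fin (t - 1) × {e : Sym2 (Fin 3) // ¬ e.IsDiag} =>
      Sym2.map (tv p.1) p.2.val) with hB
  have memA : ∀ a b : Fin 7, a ≠ b → s(kv a, kv b) ∈ A := by
    intro a b hab
    exact ⟨⟨s(a, b), by rwa [Sym2.mk_isDiag_iff]⟩, Sym2.map_pair_eq kv a b⟩
  have memB : ∀ (i : Fin (t - 1)) (a b : Fin 3), a ≠ b → s(tv i a, tv i b) ∈ B := by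
    intro i a b hab
    exact ⟨⟨i, ⟨s(a, b), by rwa [Sym2.mk_isDiag_iff]⟩⟩, Sym2.map_pair_eq (tv i) a b⟩
  have hset : (extremalGraph t m).edgeSet = A ∪ B := by
    ext e
    induction e using Sym2.ind with
    | _ x y =>
      rw [SimpleGraph.mem_edgeSet]
      constructor
      · intro h
        rw [extremalGraph, fromRel_adj] at h
        obtain ⟨hne, h | h⟩ := h
        · rcases h with ⟨a, b, rfl, rfl⟩ | ⟨i, a, b, rfl, rfl⟩
          · exact Or.inl (memA a b (fun hh => hne (congrArg _ hh)))
          · exact Or.inr (memB i a b (fun hh => hne (by rw [hh])))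
        · rcases h with ⟨a, b, rfl, rfl⟩ | ⟨i, a, b, rfl, rfl⟩
          · exact Or.inl (memA b a (fun hh => hne (by rw [hh])))
          · exact Or.inr (memB i b a (fun hh => hne (by rw [hh])))
      · intro h
        rcases h with ⟨⟨e0, he0⟩, heq⟩ | ⟨⟨i, e0, he0⟩, heq⟩
        · revert he0 heq
          induction e0 using Sym2.ind with
          | _ u v =>
            intro he0 heq
            have heq' : s((kv u : Vg t m), kv v) = s(x, y) := heq
            rw [Sym2.eq_iff] at heq'
            have huv : u ≠ v := by rwa [Sym2.mk_isDiag_iff] at he0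
            rcases heq' with ⟨h1, h2⟩ | ⟨h1, h2⟩ <;> rw [← h1, ← h2]
            · exact adj_kk huv
            · exact (adj_kk huv).symm
        · revert he0 heq
          induction e0 using Sym2.ind with
          | _ u v =>
            intro he0 heq
            have heq' : s((tv i u : Vg t m), tv i v) = s(x, y) := heq
            rw [Sym2.eq_iff] at heq'
            have huv : u ≠ v := by rwa [Sym2.mk_isDiag_iff] at he0
            rcases heq' with ⟨h1, h2⟩ | ⟨h1, h2⟩ <;> rw [← h1, ← h2]
            · exact adj_tt i huv
            · exact (adj_tt i huv).symm
  have hdisj : Disjoint A B := by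
    rw [Set.disjoint_left]
    rintro e heA heB
    obtain ⟨⟨e0, he0⟩, rfl⟩ := heA
    obtain ⟨⟨i, e1, he1⟩, heq⟩ := heB
    revert he0 he1 heq
    induction e0 using Sym2.ind with
    | _ u v =>
      induction e1 using Sym2.ind with
      | _ x y =>
        intro he0 he1 heq
        have heq' : s((tv i x : Vg t m), tv i y) = s(kv u, kv v) := heq
        rw [Sym2.eq_iff] at heq'
        rcases heq' with ⟨h1, _⟩ | ⟨h1, _⟩ <;> simp [kv, tv] at h1
  have hAcard : A.ncard = 21 := by
    have hinj : Function.Injective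
        (fun e : {e : Sym2 (Fin 7) // ¬ e.IsDiag} => Sym2.map (kv : Fin 7 → Vg t m) e.val) :=
      fun e e' h => Subtype.ext (Sym2.map.injective Sum.inl_injective h)
    rw [hA, ← Nat.card_coe_set_eq, Nat.card_range_of_injective hinj,
      Nat.card_eq_fintype_card, Sym2.card_subtype_not_diag]
    decide
  have tvinj : ∀ (i i' : Fin (t - 1)) (e e' : Sym2 (Fin 3)),
      Sym2.map (tv i : Fin 3 → Vg t m) e = Sym2.map (tv i') e' → i = i' ∧ e = e' := by
    intro i i' e e'
    induction e using Sym2.ind with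
    | _ x y =>
      induction e' using Sym2.ind with
      | _ x' y' =>
        intro h
        have h' : s((tv i x : Vg t m), tv i y) = s(tv i' x', tv i' y') := h
        rw [Sym2.eq_iff] at h'
        rcases h' with ⟨h1, h2⟩ | ⟨h1, h2⟩ <;>
          simp only [tv, Sum.inr.injEq, Sum.inl.injEq, Prod.mk.injEq] at h1 h2 <;>
          exact ⟨h1.1, by rw [Sym2.eq_iff]; tauto⟩
  have hBcard : B.ncard = 3 * (t - 1) := by
    have hinj : Function.Injective
        (fun p : Fin (t - 1) × {e : Sym2 (Fin 3) // ¬ e.IsDiag} =>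
          Sym2.map (tv p.1 : Fin 3 → Vg t m) p.2.val) := by
      intro p p' h
      obtain ⟨h1, h2⟩ := tvinj _ _ _ _ h
      exact Prod.ext h1 (Subtype.ext h2)
    rw [hB, ← Nat.card_coe_set_eq, Nat.card_range_of_injective hinj,
      Nat.card_prod, Nat.card_eq_fintype_card, Nat.card_eq_fintype_card,
      Fintype.card_fin, Sym2.card_subtype_not_diag]
    simp [Nat.choose]
    ring
  rw [hset, Set.ncard_union_eq hdisj (Set.toFinite A) (Set.toFinite B), hAcard, hBcard]

end helpers

lemma tv_eq_aux {i r : Fin (t - 1)} {b c : Fin 3} (h : (tv i b : Vg t m) = tv r c)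
    (pos : Fin (t - 1) → Fin 3) (hpos : pos i = b) : c = pos r := by
  rw [Sum.inr.injEq, Sum.inl.injEq, Prod.mk.injEq] at h
  obtain ⟨h1, h2⟩ := h
  subst h1; subst h2; exact hpos.symm

lemma saturation_add (ht : 1 ≤ t) (v w : Vg t m) (hvw : v ≠ w)
    (hna : ¬ (extremalGraph t m).Adj v w) :
    IsSubCopy (pathMatch 6 t) (extremalGraph t m ⊔ fromEdgeSet {s(v, w)}) := by
  rcases v with a | ⟨i, b⟩ | x <;> rcases w with a' | ⟨i', b'⟩ | x'
  · exact absurd (adj_kk (fun h => hvw (congrArg Sum.inl h))) hna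
  · exact T1 a (tv i' b') (fun r => if r = i' then b' else 0)
      (fun r c h => tv_eq_aux h (fun r => if r = i' then b' else 0) (if_pos rfl))
      (by simp [kv, tv])
  · exact T1 a (iv x') (fun _ => 0) (fun r c h => absurd h (by simp [iv, tv]))
      (by simp [kv, iv])
  · rw [show (s(Sum.inr (Sum.inl (i, b)), Sum.inl a') : Sym2 (Vg t m))
        = s(Sum.inl a', Sum.inr (Sum.inl (i, b))) from Sym2.eq_swap]
    exact T1 a' (tv i b) (fun r => if r = i then b else 0)
      (fun r c h => tv_eq_aux h (fun r => if r = i then b else 0) (if_pos rfl))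
      (by simp [kv, tv])
  · by_cases hii : i = i'
    · subst hii
      refine absurd (adj_tt i (fun h => hvw ?_)) hna
      rw [h]
    · refine T2 (tv i b) (tv i' b') hvw
        (fun r => if r = i then b else if r = i' then b' else 0) ?_ ?_
        (by simp [kv, tv]) (by simp [kv, tv])
      · intro r c h
        exact tv_eq_aux h (fun r => if r = i then b else if r = i' then b' else 0) (if_pos rfl)
      · intro r c h
        have hpos : (if i' = i then b else if i' = i' then b' else (0 : Fin 3)) = b' := by
          rw [if_neg (fun hh => hii hh.symm)]
          exact if_pos rfl
        exact tv_eq_aux h (fun r => if r = i then b else if r = i' then b' else 0) hpos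
  · exact T2 (tv i b) (iv x') hvw (fun r => if r = i then b else 0)
      (fun r c h => tv_eq_aux h (fun r => if r = i then b else 0) (if_pos rfl))
      (fun r c h => absurd h (by simp [iv, tv]))
      (by simp [kv, tv]) (by simp [kv, iv])
  · rw [show (s(Sum.inr (Sum.inr x), Sum.inl a') : Sym2 (Vg t m))
        = s(Sum.inl a', Sum.inr (Sum.inr x)) from Sym2.eq_swap]
    exact T1 a' (iv x) (fun _ => 0) (fun r c h => absurd h (by simp [iv, tv]))
      (by simp [kv, iv])
  · rw [show (s(Sum.inr (Sum.inr x), Sum.inr (Sum.inl (i', b'))) : Sym2 (Vg t m))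
        = s(Sum.inr (Sum.inl (i', b')), Sum.inr (Sum.inr x)) from Sym2.eq_swap]
    exact T2 (tv i' b') (iv x) (Ne.symm hvw) (fun r => if r = i' then b' else 0)
      (fun r c h => tv_eq_aux h (fun r => if r = i' then b' else 0) (if_pos rfl))
      (fun r c h => absurd h (by simp [iv, tv]))
      (by simp [kv, tv]) (by simp [kv, iv])
  · exact T2 (iv x) (iv x') hvw (fun _ => 0)
      (fun r c h => absurd h (by simp [iv, tv]))
      (fun r c h => absurd h (by simp [iv, tv]))
      (by simp [kv, iv]) (by simp [kv, iv])


/-- For `n ≥ 3t + 4`, the graph `K_7 + (t-1)K_3 + (n - 3t - 4)K_1` is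
`(P_6 + tP_2)`-saturated, has order `n`, and has exactly `3t + 18` edges. -/
theorem statement12 (n t : ℕ) (ht : 1 ≤ t) (hn : 3 * t + 4 ≤ n) :
    Saturated (extremalGraph t (n - 3 * t - 4)) (pathMatch 6 t) ∧
    Fintype.card (Fin 7 ⊕ (Fin (t - 1) × Fin 3) ⊕ Fin (n - 3 * t - 4)) = n ∧
    (extremalGraph t (n - 3 * t - 4)).edgeSet.ncard = 3 * t + 18 := by
  refine ⟨⟨no_copy ht, fun v w hvw hna => saturation_add ht v w hvw hna⟩, ?_, ?_⟩
  · simp only [Fintype.card_sum, Fintype.card_prod, Fintype.card_fin]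
    omega
  · rw [edge_count]
    omega
end

section
/- If G is a (P_6 + tP_2)-saturated graph (t ≥ 1) with exactly one isolated vertex, then the number of edges of G is at least |V(G)| − 1. -/
open SimpleGraph

lemma pm_adj {k t : ℕ} {x y : Fin k ⊕ Fin t × Fin 2} (h : (pathMatch k t).Adj x y) :
    (∃ a b : Fin k, (pathGraph k).Adj a b ∧ x = Sum.inl a ∧ y = Sum.inl b) ∨
    (∃ i : Fin t, (x = Sum.inr (i,0) ∧ y = Sum.inr (i,1)) ∨ (x = Sum.inr (i,1) ∧ y = Sum.inr (i,0))) := by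
  rw [pathMatch, fromRel_adj] at h
  obtain ⟨hne, h | h⟩ := h
  · rcases h with (⟨a, b, hab, hx, hy⟩ | ⟨i, hx, hy⟩)
    · exact Or.inl ⟨a, b, hab, hx, hy⟩
    · exact Or.inr ⟨i, Or.inl ⟨hx, hy⟩⟩
  · rcases h with (⟨a, b, hab, hx, hy⟩ | ⟨i, hx, hy⟩)
    · exact Or.inl ⟨b, a, hab.symm, hy, hx⟩
    · exact Or.inr ⟨i, Or.inr ⟨hy, hx⟩⟩

lemma pm_adj_inl {k t : ℕ} {a b : Fin k} :
    (pathMatch k t).Adj (Sum.inl a) (Sum.inl b) ↔ (pathGraph k).Adj a b := by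
  constructor
  · intro h
    rcases pm_adj h with (⟨a', b', hab, ha, hb⟩ | ⟨i, (⟨h1, _⟩ | ⟨h1, _⟩)⟩)
    · cases ha; cases hb; exact hab
    · cases h1
    · cases h1
  · intro h
    rw [pathMatch, fromRel_adj]
    refine ⟨fun hc => ?_, Or.inl (Or.inl ⟨a, b, h, rfl, rfl⟩)⟩
    rw [Sum.inl.injEq] at hc; exact h.ne hc

lemma pm_adj_inr {k t : ℕ} (i : Fin t) :
    (pathMatch k t).Adj (Sum.inr (i, 0)) (Sum.inr (i, 1)) := by
  rw [pathMatch, fromRel_adj]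
  exact ⟨by simp, Or.inl (Or.inr ⟨i, rfl, rfl⟩)⟩

/-- every vertex has a neighbor -/
lemma pm_deg {t : ℕ} (x : Fin 6 ⊕ Fin t × Fin 2) : ∃ y, (pathMatch 6 t).Adj x y := by
  rcases x with a | ⟨i, j⟩
  · have : ∃ b : Fin 6, (pathGraph 6).Adj a b := by
      fin_cases a
      · exact ⟨1, by rw [pathGraph_adj]; decide⟩
      · exact ⟨0, by rw [pathGraph_adj]; decide⟩
      · exact ⟨1, by rw [pathGraph_adj]; decide⟩
      · exact ⟨2, by rw [pathGraph_adj]; decide⟩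
      · exact ⟨3, by rw [pathGraph_adj]; decide⟩
      · exact ⟨4, by rw [pathGraph_adj]; decide⟩
    obtain ⟨b, hb⟩ := this
    exact ⟨Sum.inl b, pm_adj_inl.2 hb⟩
  · fin_cases j
    · exact ⟨Sum.inr (i, 1), pm_adj_inr i⟩
    · exact ⟨Sum.inr (i, 0), (pm_adj_inr i).symm⟩

lemma pm_inr_nbr {k t : ℕ} {i : Fin t} {j : Fin 2} {p : Fin k ⊕ Fin t × Fin 2}
    (h : (pathMatch k t).Adj (Sum.inr (i,j)) p) :
    ∃ j' : Fin 2, p = Sum.inr (i, j') ∧ j' ≠ j := by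
  rcases pm_adj h with (⟨a, b, _, hy, _⟩ | ⟨i', (⟨hy, hp⟩ | ⟨hy, hp⟩)⟩)
  · cases hy
  · simp only [Sum.inr.injEq, Prod.mk.injEq] at hy
    obtain ⟨h1, h2⟩ := hy; subst h1; subst h2
    exact ⟨1, hp, by decide⟩
  · simp only [Sum.inr.injEq, Prod.mk.injEq] at hy
    obtain ⟨h1, h2⟩ := hy; subst h1; subst h2
    exact ⟨0, hp, by decide⟩

/-- no P3 configuration: y adjacent to both x and z, x ≠ z, and x, z each have y as only neighbor. -/
lemma pm_noP3 {t : ℕ} {x y z : Fin 6 ⊕ Fin t × Fin 2}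
    (hxy : (pathMatch 6 t).Adj y x) (hzy : (pathMatch 6 t).Adj y z) (hxz : x ≠ z)
    (hx : ∀ p, (pathMatch 6 t).Adj x p → p = y)
    (hz : ∀ p, (pathMatch 6 t).Adj z p → p = y) : False := by
  rcases pm_adj hxy with (⟨c, a, hca, hy, hxa⟩ | ⟨i, (⟨hy, hxa⟩ | ⟨hy, hxa⟩)⟩)
  · -- y = inl c, x = inl a
    rcases pm_adj hzy with (⟨c', b, hcb, hy', hzb⟩ | ⟨i, (⟨hy', _⟩ | ⟨hy', _⟩)⟩)
    · rw [hy] at hy'; rw [Sum.inl.injEq] at hy'; subst hy'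
      subst hxa; subst hzb; subst hy
      have hxz' : a ≠ b := fun h => hxz (by rw [h])
      have hx' : ∀ d : Fin 6, (pathGraph 6).Adj a d → d = c := by
        intro d hd
        have := hx (Sum.inl d) (pm_adj_inl.2 hd)
        rwa [Sum.inl.injEq] at this
      have hz' : ∀ d : Fin 6, (pathGraph 6).Adj b d → d = c := by
        intro d hd
        have := hz (Sum.inl d) (pm_adj_inl.2 hd)
        rwa [Sum.inl.injEq] at this
      -- now a pure Fin 6 statement
      revert hca hcb hxz' hx' hz'
      have key : ∀ a b c : Fin 6, (pathGraph 6).Adj c a → (pathGraph 6).Adj c b → a ≠ b →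
          (∀ d : Fin 6, (pathGraph 6).Adj a d → d = c) →
          (∀ d : Fin 6, (pathGraph 6).Adj b d → d = c) → False := by
        simp only [pathGraph_adj]
        decide
      exact fun h1 h2 h3 h4 h5 => key a b c h1 h2 h3 h4 h5
    · rw [hy] at hy'; cases hy'
    · rw [hy] at hy'; cases hy'
  all_goals {
    obtain ⟨jx, hxj, hjx⟩ := pm_inr_nbr (hy ▸ hxy)
    obtain ⟨jz, hzj, hjz⟩ := pm_inr_nbr (hy ▸ hzy)
    have : jx = jz := by omega
    exact hxz (by rw [hxj, hzj, this]) }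

section Main
variable {V : Type*} [Fintype V] [DecidableEq V]

lemma no_deg_one (G : SimpleGraph V) [DecidableRel G.Adj] (t : ℕ)
    (hsat : Saturated G (pathMatch 6 t))
    {w : V} (hw : w ∉ G.support) {v : V} (hv : v ∈ G.support) : G.degree v ≠ 1 := by
  intro hdeg
  have hdeg' : (G.neighborFinset v).card = 1 := hdeg
  obtain ⟨u, hu⟩ := Finset.card_eq_one.mp hdeg'
  have hvu : G.Adj v u := by
    rw [← SimpleGraph.mem_neighborFinset, hu]; exact Finset.mem_singleton_self u
  have hvonly : ∀ x, G.Adj v x → x = u := by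
    intro x hx
    have := (SimpleGraph.mem_neighborFinset G v x).mpr hx
    rwa [hu, Finset.mem_singleton] at this
  have hwadj : ∀ x, ¬ G.Adj w x := by
    intro x hx; exact hw ⟨x, hx⟩
  have hwv : w ≠ v := fun h => hw (h ▸ hv)
  have hwu : w ≠ u := fun h => hw ⟨v, (h ▸ hvu.symm : G.Adj w v)⟩
  have hvne : v ≠ u := hvu.ne
  obtain ⟨f, hf⟩ := hsat.2 w u hwu (hwadj u)
  have hG' : ∀ {p q : V}, (G ⊔ fromEdgeSet {s(w, u)}).Adj p q →
      G.Adj p q ∨ (p = w ∧ q = u) ∨ (p = u ∧ q = w) := by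
    intro p q h
    rcases h with h | h
    · exact Or.inl h
    · rw [fromEdgeSet_adj, Set.mem_singleton_iff, Sym2.eq_iff] at h
      tauto
  have hwN : ∀ x, (G ⊔ fromEdgeSet {s(w, u)}).Adj w x → x = u := by
    intro x h
    rcases hG' h with h | ⟨_, h2⟩ | ⟨h1, _⟩
    · exact absurd h (hwadj x)
    · exact h2
    · exact absurd h1 hwu
  have hvN : ∀ x, (G ⊔ fromEdgeSet {s(w, u)}).Adj v x → x = u := by
    intro x h
    rcases hG' h with h | ⟨h1, _⟩ | ⟨h1, h2⟩
    · exact hvonly x h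
    · exact absurd h1.symm hwv
    · exact absurd h1 hvne
  have hwr : ∃ z, f z = w := by
    by_contra h
    push_neg at h
    apply hsat.1
    refine ⟨⟨⇑f, ?_⟩, fun a b hab => hf hab⟩
    intro a b hab
    rcases hG' (f.map_adj hab) with h' | ⟨h1, _⟩ | ⟨_, h2⟩
    · exact h'
    · exact (h a h1).elim
    · exact (h b h2).elim
  obtain ⟨z, hz⟩ := hwr
  have hvr : ∀ a, f a ≠ v := by
    intro x hx
    obtain ⟨y, hxy⟩ := pm_deg x
    have hfy : f y = u := by
      have h' := f.map_adj hxy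
      rw [hx] at h'
      exact hvN (f y) h'
    obtain ⟨z', hzz'⟩ := pm_deg z
    have hfz' : f z' = u := by
      have h' := f.map_adj hzz'
      rw [hz] at h'
      exact hwN (f z') h'
    have hz'y : z' = y := hf (hfz'.trans hfy.symm)
    subst hz'y
    have hxzne : x ≠ z := by
      intro h; rw [h, hz] at hx; exact hwv hx
    refine pm_noP3 hxy.symm hzz'.symm hxzne ?_ ?_
    · intro p hp
      have h1 : f p = u := by
        have h' := f.map_adj hp
        rw [hx] at h'
        exact hvN (f p) h'
      exact hf (h1.trans hfy.symm)
    · intro p hp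
      have h1 : f p = u := by
        have h' := f.map_adj hp
        rw [hz] at h'
        exact hwN (f p) h'
      exact hf (h1.trans hfy.symm)
  apply hsat.1
  refine ⟨⟨fun a => if f a = w then v else f a, ?_⟩, ?_⟩
  · intro a b hab
    by_cases h1 : f a = w <;> by_cases h2 : f b = w
    · exact absurd (hf (h1.trans h2.symm)) hab.ne
    · have hfb : f b = u := by
        have h' := f.map_adj hab
        rw [h1] at h'
        exact hwN (f b) h'
      rw [if_pos h1, if_neg h2, hfb]
      exact hvu
    · have hfa : f a = u := by
        have h' := (f.map_adj hab).symm
        rw [h2] at h'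
        exact hwN (f a) h'
      rw [if_neg h1, if_pos h2, hfa]
      exact hvu.symm
    · rw [if_neg h1, if_neg h2]
      rcases hG' (f.map_adj hab) with h' | ⟨ha, _⟩ | ⟨_, hb⟩
      · exact h'
      · exact (h1 ha).elim
      · exact (h2 hb).elim
  · intro a b h
    change (if f a = w then v else f a) = (if f b = w then v else f b) at h
    by_cases h1 : f a = w <;> by_cases h2 : f b = w
    · exact hf (h1.trans h2.symm)
    · rw [if_pos h1, if_neg h2] at h; exact absurd h.symm (hvr b)
    · rw [if_neg h1, if_pos h2] at h; exact absurd h (hvr a)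
    · rw [if_neg h1, if_neg h2] at h; exact hf h

end Main

/-- A `(P_6 + tP_2)`-saturated graph with exactly one isolated vertex has at least
`|V(G)| - 1` edges. -/
theorem statement13 {V : Type*} [Fintype V] (G : SimpleGraph V) (t : ℕ) (ht : 1 ≤ t)
    (hsat : Saturated G (pathMatch 6 t))
    (hiso : ∃! w : V, w ∉ G.support) :
    Fintype.card V - 1 ≤ G.edgeSet.ncard := by
  classical
  obtain ⟨w, hw, huniq⟩ := hiso
  have hdeg2 : ∀ v : V, v ≠ w → 2 ≤ G.degree v := by
    intro v hvw
    have hv : v ∈ G.support := by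
      by_contra h; exact hvw (huniq v h)
    have h1 : 0 < G.degree v := by
      rw [SimpleGraph.degree_pos_iff_exists_adj]
      exact hv
    have h2 := no_deg_one G t hsat hw hv
    omega
  have hsum : ∑ v, G.degree v = 2 * G.edgeFinset.card := G.sum_degrees_eq_twice_card_edges
  have hcard : G.edgeSet.ncard = G.edgeFinset.card := Set.ncard_eq_toFinset_card' G.edgeSet
  have hb1 : ∑ v ∈ Finset.univ.erase w, 2 ≤ ∑ v ∈ Finset.univ.erase w, G.degree v :=
    Finset.sum_le_sum (fun i hi => hdeg2 i (Finset.ne_of_mem_erase hi))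
  have hb2 : ∑ v ∈ Finset.univ.erase w, G.degree v ≤ ∑ v, G.degree v :=
    Finset.sum_le_sum_of_subset (Finset.erase_subset _ _)
  have hb3 : ∑ v ∈ Finset.univ.erase w, 2 = 2 * (Fintype.card V - 1) := by
    rw [Finset.sum_const, Finset.card_erase_of_mem (Finset.mem_univ w)]
    simp [Finset.card_univ, Nat.mul_comm]
  omega
end

section
/- Let G be a (P_4 + sP_2)-saturated graph whose nontrivial components all have order at least 6 and minimum degree at least 2 (over the union Q of nontrivial components), and suppose the matching number of Q is at least s + 1. Then the matching number of Q is exactly s + 1. -/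
open SimpleGraph

/-!
If `Q` had `s + 2` disjoint edges, then `G` would already contain `P_4 + sP_2`, contradicting
saturation: it suffices to find a `P_4` meeting at most two of these edges and to keep `s` of the
others. If an edge of `G` joins two matching edges `ab` and `cd`, take `a-b-c-d`. Otherwise fix a
matching edge `ab`; by the degree condition `a` and `b` have further neighbours, none of them on
the matching. Two distinct such neighbours `c ∼ a`, `d ∼ b` give `c-a-b-d`. If there is no such
pair, then `N(a) = {b, c}` and `N(b) = {a, c}`, and since the component of `a` has more than
three vertices, `c` has a neighbour `q` outside the triangle `abc`; then `q-c-a-b` meets only `ab`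
and the matching edge through `q`.
-/

namespace SimpleGraph

variable {V W ι κ : Type*} {G : SimpleGraph V} {s : ℕ}

def IsMatchingFamily (G : SimpleGraph V) (m : ι × Fin 2 → V) : Prop :=
  Function.Injective m ∧ ∀ i, G.Adj (m (i, 0)) (m (i, 1))

namespace IsMatchingFamily

variable {m : ι × Fin 2 → V}

lemma adj (hm : G.IsMatchingFamily m) (i : ι) {j j' : Fin 2} (h : j ≠ j') :
    G.Adj (m (i, j)) (m (i, j')) := by
  fin_cases j <;> fin_cases j' <;> first | exact absurd rfl h | exact hm.2 i | exact (hm.2 i).symm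

lemma map {G' : SimpleGraph W} (hm : G.IsMatchingFamily m) (f : G ↪g G') :
    G'.IsMatchingFamily (f ∘ m) :=
  ⟨f.injective.comp hm.1, fun i => f.map_rel_iff.2 (hm.2 i)⟩

lemma comp_embedding (hm : G.IsMatchingFamily m) (e : κ ↪ ι) :
    G.IsMatchingFamily (m ∘ Prod.map e id) :=
  ⟨hm.1.comp (e.injective.prodMap Function.injective_id), fun i => hm.2 (e i)⟩

lemma exists_forall_ne [Nonempty ι] (hm : G.IsMatchingFamily m) (v : V) :
    ∃ k, ∀ i ≠ k, ∀ j, m (i, j) ≠ v := by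
  by_cases hv : ∃ k j, m (k, j) = v
  · obtain ⟨k, j, rfl⟩ := hv
    exact ⟨k, fun i hik j' h => hik (congrArg Prod.fst (hm.1 h))⟩
  · push Not at hv
    exact ⟨Classical.arbitrary ι, fun i _ => hv i⟩

lemma exists_isMatching (hm : G.IsMatchingFamily m) :
    ∃ M : G.Subgraph, M.IsMatching ∧ M.edgeSet.ncard = Nat.card ι := by
  refine ⟨⨆ i, G.subgraphOfAdj (hm.2 i),
    Subgraph.IsMatching.iSup (fun i => .subgraphOfAdj _) fun i k hik => ?_, ?_⟩
  · simp only [support_subgraphOfAdj, Set.disjoint_insert_left, Set.disjoint_insert_right,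
      Set.disjoint_singleton, Set.mem_insert_iff, Set.mem_singleton_iff, not_or]
    refine ⟨⟨?_, ?_⟩, ?_, ?_⟩ <;> exact hm.1.ne (by simp [hik, hik.symm])
  · have hinj : Function.Injective fun i => s(m (i, 0), m (i, 1)) := by
      intro i k h
      rcases Sym2.eq_iff.1 h with ⟨h0, -⟩ | ⟨h0, -⟩ <;> exact congrArg Prod.fst (hm.1 h0)
    rw [Subgraph.edgeSet_iSup, ← Set.ncard_range_of_injective hinj]
    congr 1
    ext e
    simp [edgeSet_subgraphOfAdj, eq_comm]

end IsMatchingFamily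

namespace Subgraph.IsMatching

variable {M : G.Subgraph}

lemma eq_of_mem_of_mem (hM : M.IsMatching) {e e' : Sym2 V} (he : e ∈ M.edgeSet)
    (he' : e' ∈ M.edgeSet) {v : V} (hv : v ∈ e) (hv' : v ∈ e') : e = e' := by
  obtain ⟨w, rfl⟩ := Sym2.mem_iff_exists.1 hv
  obtain ⟨w', rfl⟩ := Sym2.mem_iff_exists.1 hv'
  rw [hM.eq_of_adj_left (M.mem_edgeSet.1 he) (M.mem_edgeSet.1 he')]

lemma exists_isMatchingFamily (hM : M.IsMatching) {t : Set (Sym2 V)} (ht : t ⊆ M.edgeSet) :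
    ∃ m : t × Fin 2 → V, G.IsMatchingFamily m := by
  have hadj (e : t) : G.Adj e.1.out.1 e.1.out.2 := by
    apply M.adj_sub
    rw [← Subgraph.mem_edgeSet, show s(e.1.out.1, e.1.out.2) = e.1 from Quot.out_eq _]
    exact ht e.2
  let m (p : t × Fin 2) : V := ![p.1.1.out.1, p.1.1.out.2] p.2
  have hmem (e : t) (j : Fin 2) : m (e, j) ∈ e.1 := by
    fin_cases j
    exacts [Sym2.out_fst_mem _, Sym2.out_snd_mem _]
  refine ⟨m, ?_, hadj⟩
  rintro ⟨e, j⟩ ⟨e', j'⟩ h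
  obtain rfl : e = e' := Subtype.ext <|
    hM.eq_of_mem_of_mem (ht e.2) (ht e'.2) (hmem e j) (h ▸ hmem e' j')
  fin_cases j <;> fin_cases j' <;> simp [m, (hadj e).ne, (hadj e).ne'] at h ⊢

lemma exists_isMatching_ncard_eq (hM : M.IsMatching) {n : ℕ} (h : n ≤ M.edgeSet.ncard) :
    ∃ M' : G.Subgraph, M'.IsMatching ∧ M'.edgeSet.ncard = n := by
  obtain ⟨t, ht, rfl⟩ := Set.exists_subset_card_eq h
  obtain ⟨m, hm⟩ := hM.exists_isMatchingFamily ht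
  simpa using hm.exists_isMatching

end Subgraph.IsMatching

lemma exists_mem_notMem_adj_of_card_lt {S : Finset V} {a : V} (ha : a ∈ S)
    (h : S.card < (G.connectedComponentMk a).supp.ncard) : ∃ p ∈ S, ∃ q ∉ S, G.Adj p q := by
  obtain ⟨y, hy, hyS⟩ : ∃ y ∈ (G.connectedComponentMk a).supp, y ∉ S := by
    by_contra! hsub
    have := Set.ncard_le_ncard (t := (S : Set V)) hsub
    rw [Set.ncard_coe_finset] at this
    omega
  obtain ⟨W⟩ := ConnectedComponent.exact hy.symm
  obtain ⟨d, -, hd, hd'⟩ := W.exists_boundary_dart S ha hyS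
  exact ⟨d.fst, hd, d.snd, hd', d.adj⟩

lemma isSubCopy_pathMatch_of_path {w x y z : V} (hwx : G.Adj w x) (hxy : G.Adj x y)
    (hyz : G.Adj y z) (hwy : w ≠ y) (hwz : w ≠ z) (hxz : x ≠ z) {m : Fin s × Fin 2 → V}
    (hm : G.IsMatchingFamily m) (havoid : ∀ e, m e ∉ ({w, x, y, z} : Set V)) :
    IsSubCopy (pathMatch 4 s) G := by
  have hp : Function.Injective ![w, x, y, z] := by
    intro a b h
    fin_cases a <;> fin_cases b <;> simp [hwx.ne, hxy.ne, hyz.ne, hwy, hwz, hxz, hwx.ne',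
      hxy.ne', hyz.ne', hwy.symm, hwz.symm, hxz.symm] at h ⊢
  refine ⟨⟨Sum.elim ![w, x, y, z] m, ?_⟩, hp.sumElim hm.1 ?_⟩
  · rintro (a | e) (b | e') h <;> simp [pathMatch, pathGraph_adj] at h
    · fin_cases a <;> fin_cases b <;> simp_all [G.adj_comm]
    · obtain ⟨-, ⟨i, rfl, rfl⟩ | ⟨i, rfl, rfl⟩⟩ := h
      exacts [hm.2 i, (hm.2 i).symm]
  · intro a e h
    apply havoid e
    rw [← h]
    fin_cases a <;> simp

section

variable {m : ι × Fin 2 → V}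

lemma isSubCopy_pathMatch_of_path_of_avoid {w x y z : V} (hwx : G.Adj w x) (hxy : G.Adj x y)
    (hyz : G.Adj y z) (hwy : w ≠ y) (hwz : w ≠ z) (hxz : x ≠ z) (hm : G.IsMatchingFamily m)
    {B : Finset ι} {k : ℕ} (hB : B.card ≤ k) (hcard : (s + k : ℕ∞) ≤ ENat.card ι)
    (havoid : ∀ i ∉ B, ∀ j, m (i, j) ∉ ({w, x, y, z} : Set V)) :
    IsSubCopy (pathMatch 4 s) G := by
  have hB' : ((B : Set ι).ncard + s : ℕ∞) ≤ ENat.card ι := by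
    rw [Set.ncard_coe_finset]
    exact le_trans (by norm_cast; omega) hcard
  obtain ⟨e, he⟩ := Fin.Embedding.exists_embedding_disjoint_range_of_add_le_ENat_card hB'
  refine isSubCopy_pathMatch_of_path hwx hxy hyz hwy hwz hxz (hm.comp_embedding e) fun p => ?_
  exact havoid _ (Set.disjoint_right.1 he ⟨p.1, rfl⟩) _

lemma isSubCopy_pathMatch_of_adj_of_ne (hm : G.IsMatchingFamily m)
    (hcard : (s + 2 : ℕ∞) ≤ ENat.card ι) {i k : ι} (hik : i ≠ k) {j l : Fin 2}
    (h : G.Adj (m (i, j)) (m (k, l))) : IsSubCopy (pathMatch 4 s) G := by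
  classical
  obtain ⟨j', hj'⟩ := exists_ne j
  obtain ⟨l', hl'⟩ := exists_ne l
  refine isSubCopy_pathMatch_of_path_of_avoid (hm.adj i hj') h (hm.adj k hl'.symm)
    (hm.1.ne (by simp [hik])) (hm.1.ne (by simp [hik])) (hm.1.ne (by simp [hik])) hm
    (B := {i, k}) Finset.card_le_two hcard fun n hn _ => ?_
  simp only [Finset.mem_insert, Finset.mem_singleton, not_or] at hn
  simp [hm.1.eq_iff, hn.1, hn.2]

lemma isSubCopy_pathMatch_of_path_mid_edge (hm : G.IsMatchingFamily m)
    (hcard : (s + 1 : ℕ∞) ≤ ENat.card ι) (i : ι) {x y : V}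
    (hx : G.Adj x (m (i, 0))) (hy : G.Adj (m (i, 1)) y) (hxy : x ≠ y)
    (hxm : ∀ k l, m (k, l) ≠ x) (hym : ∀ k l, m (k, l) ≠ y) :
    IsSubCopy (pathMatch 4 s) G := by
  classical
  refine isSubCopy_pathMatch_of_path_of_avoid hx (hm.2 i) hy (hxm i 1).symm hxy (hym i 0) hm
    (B := {i}) (Finset.card_singleton i).le hcard fun n hn j => ?_
  rw [Finset.mem_singleton] at hn
  simp [hm.1.eq_iff, hn, hxm n j, hym n j]

lemma isSubCopy_pathMatch_of_path_end_edge (hm : G.IsMatchingFamily m)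
    (hcard : (s + 2 : ℕ∞) ≤ ENat.card ι) (i : ι) {c q : V}
    (hc : G.Adj c (m (i, 0))) (hq : G.Adj q c) (hqa : q ≠ m (i, 0)) (hqb : q ≠ m (i, 1))
    (hcm : ∀ k l, m (k, l) ≠ c) : IsSubCopy (pathMatch 4 s) G := by
  classical
  have : Nonempty ι := ⟨i⟩
  obtain ⟨k, hk⟩ := hm.exists_forall_ne q
  refine isSubCopy_pathMatch_of_path_of_avoid hq hc (hm.2 i) hqa hqb (hcm i 1).symm hm
    (B := {i, k}) Finset.card_le_two hcard fun n hn j => ?_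
  simp only [Finset.mem_insert, Finset.mem_singleton, not_or] at hn
  simp [hm.1.eq_iff, hn.1, hk n hn.2 j, hcm n j]

lemma apply_ne_of_adj_of_induced (hind : ∀ i k j l, G.Adj (m (i, j)) (m (k, l)) → i = k)
    {i : ι} {j j' : Fin 2} (hjj' : j ≠ j') {v : V} (hv : G.Adj (m (i, j)) v)
    (hv' : v ≠ m (i, j')) (k : ι) (l : Fin 2) : m (k, l) ≠ v := by
  rintro rfl
  obtain rfl := hind _ _ _ _ hv
  rcases (by omega : l = j ∨ l = j') with rfl | rfl
  exacts [hv.ne rfl, hv' rfl]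

lemma isSubCopy_pathMatch_of_induced
    (hdeg : ∀ v ∈ G.support, 2 ≤ (G.neighborSet v).ncard)
    (hcomp : ∀ v ∈ G.support, 3 < (G.connectedComponentMk v).supp.ncard)
    (hm : G.IsMatchingFamily m) (hcard : (s + 2 : ℕ∞) ≤ ENat.card ι)
    (hind : ∀ i k j l, G.Adj (m (i, j)) (m (k, l)) → i = k) (i : ι) :
    IsSubCopy (pathMatch 4 s) G := by
  classical
  have hab := hm.2 i
  have hother {u v : V} (huv : G.Adj u v) : ∃ w, G.Adj u w ∧ w ≠ v :=
    Set.exists_ne_of_one_lt_ncard (hdeg u ⟨v, huv⟩) v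
  obtain ⟨c, hac, hcb⟩ := hother hab
  obtain ⟨d, hbd, hda⟩ := hother hab.symm
  by_cases hpath : ∃ x y, G.Adj x (m (i, 0)) ∧ G.Adj (m (i, 1)) y ∧
      x ≠ m (i, 1) ∧ y ≠ m (i, 0) ∧ x ≠ y
  · obtain ⟨x, y, hx, hy, hxb, hya, hxy⟩ := hpath
    exact isSubCopy_pathMatch_of_path_mid_edge hm (le_trans (by gcongr; norm_num) hcard) i
      hx hy hxy (apply_ne_of_adj_of_induced hind zero_ne_one hx.symm hxb)
      (apply_ne_of_adj_of_induced hind one_ne_zero hy hya)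
  push Not at hpath
  obtain rfl : c = d := hpath c d hac.symm hbd hcb hda
  obtain ⟨p, hp, q, hq, hpq⟩ := exists_mem_notMem_adj_of_card_lt
    (S := {m (i, 0), m (i, 1), c}) (by simp) (Finset.card_le_three.trans_lt (hcomp _ ⟨_, hab⟩))
  simp only [Finset.mem_insert, Finset.mem_singleton, not_or] at hp hq
  obtain ⟨hqa, hqb, hqc⟩ := hq
  rcases hp with rfl | rfl | rfl
  · exact absurd (hpath q c hpq.symm hbd hqb hda) hqc
  · exact absurd (hpath c q hac.symm hpq hcb hqa) (Ne.symm hqc)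
  · exact isSubCopy_pathMatch_of_path_end_edge hm hcard i hac.symm hpq.symm hqa hqb
      (apply_ne_of_adj_of_induced hind zero_ne_one hac hcb)

lemma isSubCopy_pathMatch_of_isMatchingFamily
    (hdeg : ∀ v ∈ G.support, 2 ≤ (G.neighborSet v).ncard)
    (hcomp : ∀ v ∈ G.support, 3 < (G.connectedComponentMk v).supp.ncard)
    (hm : G.IsMatchingFamily m) (hcard : (s + 2 : ℕ∞) ≤ ENat.card ι) :
    IsSubCopy (pathMatch 4 s) G := by
  by_cases hind : ∀ i k j l, G.Adj (m (i, j)) (m (k, l)) → i = k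
  · obtain ⟨i⟩ : Nonempty ι := by
      rw [← ENat.card_ne_zero_iff_nonempty]
      exact (lt_of_lt_of_le (by positivity) hcard).ne'
    exact isSubCopy_pathMatch_of_induced hdeg hcomp hm hcard hind i
  · push Not at hind
    obtain ⟨i, k, j, l, h, hik⟩ := hind
    exact isSubCopy_pathMatch_of_adj_of_ne hm hcard hik h

end

end SimpleGraph

theorem statement14_general {V : Type*} (G : SimpleGraph V) (s : ℕ)
    (hsat : Saturated G (pathMatch 4 s))
    (hdel : ∀ v ∈ G.support, 2 ≤ (G.neighborSet v).ncard)
    (hcomp6 : ∀ C : G.ConnectedComponent, NontrivialComp G C → 6 ≤ C.supp.ncard)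
    (hge : ∃ M : (G.induce G.support).Subgraph, M.IsMatching ∧ s + 1 ≤ M.edgeSet.ncard) :
    (∃ M : (G.induce G.support).Subgraph, M.IsMatching ∧ M.edgeSet.ncard = s + 1) ∧
    ∀ M : (G.induce G.support).Subgraph, M.IsMatching → M.edgeSet.ncard ≤ s + 1 := by
  refine ⟨?_, fun M hM => ?_⟩
  · obtain ⟨M, hM, hn⟩ := hge
    exact hM.exists_isMatching_ncard_eq hn
  by_contra! hlt
  obtain ⟨m, hm⟩ := hM.exists_isMatchingFamily subset_rfl
  have hcomp (v : V) (hv : v ∈ G.support) : 3 < (G.connectedComponentMk v).supp.ncard :=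
    (hcomp6 _ ⟨v, rfl, hv⟩).trans_lt' (by norm_num)
  have hcard : (s + 2 : ℕ∞) ≤ ENat.card M.edgeSet :=
    le_trans (by norm_cast) (Set.ncard_le_encard _)
  exact hsat.1 <|
    isSubCopy_pathMatch_of_isMatchingFamily hdel hcomp (hm.map (Embedding.induce _)) hcard

/-- If `G` is `(P_4 + sP_2)`-saturated, the union `Q` of its nontrivial components has
minimum degree at least 2 and every nontrivial component has order at least 6, and the
matching number of `Q` is at least `s + 1`, then it equals exactly `s + 1`. -/
theorem statement14 {V : Type*} [Fintype V] (G : SimpleGraph V) (s : ℕ)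
    (hsat : Saturated G (pathMatch 4 s))
    (hdel : ∀ v ∈ G.support, 2 ≤ (G.neighborSet v).ncard)
    (hcomp6 : ∀ C : G.ConnectedComponent, NontrivialComp G C → 6 ≤ C.supp.ncard)
    (hge : ∃ M : (G.induce G.support).Subgraph, M.IsMatching ∧ s + 1 ≤ M.edgeSet.ncard) :
    (∃ M : (G.induce G.support).Subgraph, M.IsMatching ∧ M.edgeSet.ncard = s + 1) ∧
    ∀ M : (G.induce G.support).Subgraph, M.IsMatching → M.edgeSet.ncard ≤ s + 1 :=
  statement14_general G s hsat hdel hcomp6 hge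
end

section
/- Let Q be a (P_4 + sP_2)-saturated graph with matching number exactly s + 1, and let Y ⊆ V(Q) achieve the minimum in the Berge–Tutte formula, i.e., s + 1 = (|Q| + |Y| − o(Q − Y))/2. Then for every component C of Q − Y, the induced subgraph Q[Y ∪ V(C)] is a complete graph. -/
/-!
If two vertices `x ≠ y` of `Y ∪ V(C)` were non-adjacent, saturation would put a copy of
`P_4 + sP_2`, which has a perfect matching, into `Q + xy`; so `Q + xy` has a matching covering
`2s + 4` vertices. The new edge runs inside `Y ∪ V(C)`, so every edge of that matching outside
`Y` still joins vertices of one component of `Q - Y`. Then each odd component of `Q - Y` has a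
vertex that is unmatched or matched into `Y`, and these witnesses are distinct, which caps the
matched vertices at `|Q| + |Y| - o(Q - Y) = 2s + 2`.
-/

open SimpleGraph

namespace SimpleGraph

variable {V : Type*}

lemma exists_isPerfectMatching_of_involutive {G : SimpleGraph V} {p : V → V}
    (hp : Function.Involutive p) (hadj : ∀ x, G.Adj x (p x)) :
    ∃ M : G.Subgraph, M.IsPerfectMatching := by
  refine ⟨⟨Set.univ, fun x y => y = p x, ?_, fun _ => trivial, ⟨?_⟩⟩, ?_⟩
  · rintro x _ rfl
    exact hadj x
  · rintro x _ rfl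
    exact (hp x).symm
  · exact Subgraph.isPerfectMatching_iff.mpr fun _ => existsUnique_eq

lemma Subgraph.IsMatching.even_ncard_verts [Finite V] {G : SimpleGraph V} {M : G.Subgraph}
    (hM : M.IsMatching) : Even M.verts.ncard := by
  have := Fintype.ofFinite M.verts
  rw [Set.ncard_eq_toFinset_card']
  exact hM.even_card

section MatchingBound

variable [Finite V] {G : SimpleGraph V} {M : G.Subgraph} {S : Set V}
  {H : SimpleGraph (Sᶜ : Set V)}

lemma exists_mem_supp_notMem_verts_or_adj_mem (hM : M.IsMatching)
    (hMH : ∀ u v : (Sᶜ : Set V), M.Adj u v → H.Reachable u v)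
    {C : H.ConnectedComponent} (hC : Odd (Nat.card C.supp)) :
    ∃ v ∈ C.supp, ∃ w : V, (w = v ∧ (v : V) ∉ M.verts) ∨ (w ∈ S ∧ M.Adj v w) := by
  by_contra! hcon
  have hmatch : (M.induce (Subtype.val '' C.supp)).IsMatching := by
    rintro _ ⟨v, hv, rfl⟩
    obtain ⟨w, hvw, huniq⟩ := hM ((hcon v hv v).1 rfl)
    have hw : w ∈ Sᶜ := fun hwS => (hcon v hv w).2 hwS hvw
    have hwC : (⟨w, hw⟩ : (Sᶜ : Set V)) ∈ C.supp :=
      (ConnectedComponent.sound (hMH v ⟨w, hw⟩ hvw)).symm.trans hv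
    exact ⟨w, ⟨⟨v, hv, rfl⟩, ⟨_, hwC, rfl⟩, hvw⟩, fun y hy => huniq y hy.2.2⟩
  have heven := hmatch.even_ncard_verts
  rw [Subgraph.induce_verts, Set.ncard_image_of_injective _ Subtype.val_injective] at heven
  exact Nat.not_even_iff_odd.mpr hC heven

lemma ncard_verts_add_card_odd_le (hM : M.IsMatching)
    (hMH : ∀ u v : (Sᶜ : Set V), M.Adj u v → H.Reachable u v) :
    M.verts.ncard + Nat.card {C : H.ConnectedComponent // Odd (Nat.card C.supp)}
      ≤ Nat.card V + S.ncard := by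
  choose v hvC w hw using fun C : {C : H.ConnectedComponent // Odd (Nat.card C.supp)} =>
    exists_mem_supp_notMem_verts_or_adj_mem hM hMH C.2
  have hinj : Function.Injective w := by
    intro C D hCD
    have hv : v C = v D := by
      rcases hw C with ⟨hC, hCM⟩ | ⟨-, hC⟩ <;> rcases hw D with ⟨hD, hDM⟩ | ⟨-, hD⟩
      · exact Subtype.ext (hC.symm.trans (hCD.trans hD))
      · exact absurd (hC ▸ hCD ▸ M.edge_vert hD.symm) hCM
      · exact absurd (hD ▸ hCD.symm ▸ M.edge_vert hC.symm) hDM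
      · exact Subtype.ext (hM.eq_of_adj_right hC (hCD ▸ hD))
    exact Subtype.ext (ConnectedComponent.eq_of_common_vertex (hvC C) (hv ▸ hvC D))
  have hmaps : ∀ C, w C ∈ M.vertsᶜ ∪ S := fun C => by
    rcases hw C with ⟨hwv, hC⟩ | ⟨hC, -⟩
    · exact Or.inl (hwv ▸ hC)
    · exact Or.inr hC
  have hcard : Nat.card {C : H.ConnectedComponent // Odd (Nat.card C.supp)}
      ≤ (M.vertsᶜ ∪ S).ncard :=
    Nat.card_coe_set_eq (M.vertsᶜ ∪ S) ▸
      Nat.card_le_card_of_injective (fun C => ⟨w C, hmaps C⟩)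
        fun C D h => hinj (congrArg Subtype.val h)
  have := Set.ncard_union_le M.vertsᶜ S
  have := Set.ncard_add_ncard_compl M.verts
  omega

end MatchingBound

section AddEdge

variable {Q : SimpleGraph V} {Y : Set V}

lemma ConnectedComponent.mem_supp_of_mem_union_image_val {C : (Q.induce Yᶜ).ConnectedComponent}
    {u : (Yᶜ : Set V)} (hu : (u : V) ∈ Y ∪ Subtype.val '' C.supp) : u ∈ C.supp := by
  rcases hu with hY | ⟨u', hu', hu'u⟩
  · exact absurd hY u.2
  · exact Subtype.ext hu'u ▸ hu'

lemma induce_reachable_of_sup_edge_adj {C : (Q.induce Yᶜ).ConnectedComponent} {x y : V}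
    (hx : x ∈ Y ∪ Subtype.val '' C.supp) (hy : y ∈ Y ∪ Subtype.val '' C.supp)
    {u v : (Yᶜ : Set V)} (huv : (Q ⊔ fromEdgeSet {s(x, y)}).Adj u v) :
    (Q.induce Yᶜ).Reachable u v := by
  rcases huv with hQ | hxy
  · exact Adj.reachable hQ
  · rw [fromEdgeSet_adj, Set.mem_singleton_iff, Sym2.eq_iff] at hxy
    rcases hxy.1 with ⟨rfl, rfl⟩ | ⟨rfl, rfl⟩ <;>
      exact C.reachable_of_mem_supp (C.mem_supp_of_mem_union_image_val ‹_›)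
        (C.mem_supp_of_mem_union_image_val ‹_›)

end AddEdge

end SimpleGraph

lemma IsSubCopy.exists_isMatching_ncard_verts {V W : Type*} [Finite W] {H : SimpleGraph W}
    {G : SimpleGraph V} (hHG : IsSubCopy H G) {M : H.Subgraph} (hM : M.IsPerfectMatching) :
    ∃ N : G.Subgraph, N.IsMatching ∧ N.verts.ncard = Nat.card W := by
  obtain ⟨f, hf⟩ := hHG
  refine ⟨M.map f, hM.1.map f hf, ?_⟩
  rw [Subgraph.map_verts, hM.2.verts_eq_univ, Set.ncard_image_of_injective _ hf, Set.ncard_univ]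

def pathMatchPartner (s : ℕ) : Fin 4 ⊕ Fin s × Fin 2 → Fin 4 ⊕ Fin s × Fin 2 :=
  Sum.map ![1, 0, 3, 2] (Prod.map id Fin.rev)

lemma pathMatchPartner_involutive (s : ℕ) : Function.Involutive (pathMatchPartner s) := by
  rintro (a | ⟨i, j⟩)
  · fin_cases a <;> rfl
  · simp [pathMatchPartner]

lemma pathMatch_adj_pathMatchPartner (s : ℕ) (x : Fin 4 ⊕ Fin s × Fin 2) :
    (pathMatch 4 s).Adj x (pathMatchPartner s x) := by
  rcases x with a | ⟨i, j⟩
  · fin_cases a <;> simp [pathMatch, pathMatchPartner, pathGraph_adj]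
  · fin_cases j <;> simp [pathMatch, pathMatchPartner]

theorem statement15_general {V : Type*} [Fintype V] (Q : SimpleGraph V) (s : ℕ)
    (hsat : Saturated Q (pathMatch 4 s))
    (Y : Set V)
    (hY : 2 * (s + 1) +
        Nat.card {C : (Q.induce (Yᶜ : Set V)).ConnectedComponent // Odd (Nat.card C.supp)}
      = Fintype.card V + Y.ncard) :
    ∀ C : (Q.induce (Yᶜ : Set V)).ConnectedComponent,
      ∀ x ∈ Y ∪ (Subtype.val '' C.supp), ∀ y ∈ Y ∪ (Subtype.val '' C.supp),
        x ≠ y → Q.Adj x y := by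
  intro C x hx y hy hxy
  by_contra hQxy
  obtain ⟨M, hM⟩ := exists_isPerfectMatching_of_involutive (pathMatchPartner_involutive s)
    (pathMatch_adj_pathMatchPartner s)
  obtain ⟨N, hN, hNcard⟩ := (hsat.2 x y hxy hQxy).exists_isMatching_ncard_verts hM
  have hbound := ncard_verts_add_card_odd_le hN (H := Q.induce Yᶜ)
    fun u v huv => induce_reachable_of_sup_edge_adj hx hy (N.adj_sub huv)
  have hW : Nat.card (Fin 4 ⊕ Fin s × Fin 2) = 4 + 2 * s := by simp [mul_comm]
  rw [hNcard, hW, Nat.card_eq_fintype_card (α := V)] at hbound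
  omega

/-- Claim 1 in Theorem 5: let `Q` be `(P_4 + sP_2)`-saturated with matching number
exactly `s + 1`, and let `Y` attain the minimum in the Berge–Tutte formula, i.e.
`2(s + 1) = |Q| + |Y| - o(Q - Y)`. Then for every component `C` of `Q - Y`, the
induced subgraph `Q[Y ∪ V(C)]` is complete. -/
theorem statement15 {V : Type*} [Fintype V] (Q : SimpleGraph V) (s : ℕ)
    (hsat : Saturated Q (pathMatch 4 s))
    (hmatch : ∃ M : Q.Subgraph, M.IsMatching ∧ M.edgeSet.ncard = s + 1)
    (hmax : ∀ M : Q.Subgraph, M.IsMatching → M.edgeSet.ncard ≤ s + 1)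
    (Y : Set V)
    (hY : 2 * (s + 1) +
        Nat.card {C : (Q.induce (Yᶜ : Set V)).ConnectedComponent // Odd (Nat.card C.supp)}
      = Fintype.card V + Y.ncard) :
    ∀ C : (Q.induce (Yᶜ : Set V)).ConnectedComponent,
      ∀ x ∈ Y ∪ (Subtype.val '' C.supp), ∀ y ∈ Y ∪ (Subtype.val '' C.supp),
        x ≠ y → Q.Adj x y :=
  statement15_general Q s hsat Y hY
end
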